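/- arXiv:math/9904011 — 9 statements merged into one kernel-verified Lean document; each statement's English description precedes it below -/
import Mathlib

section
/- Let G be the theta graph consisting of m-1 internally disjoint paths of length 3 together with one edge, all joining the same pair of vertices u and v (so G has 3(m-1)+1 edges). Then the edge-bandwidth of G equals \lceil 3(m-1)/2 \rceil. -/
open SimpleGraph

/-- The edge-bandwidth of a finite simple graph: the minimum over injective integer
labelings of the edges of the maximum difference of labels on incident edges. -/
noncomputable def edgeBW {V : Type*} [Fintype V] (G : SimpleGraph V) : ℕ :=
  sInf {k : ℕ | ∃ f : G.edgeSet → ℤ, Function.Injective f ∧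
    ∀ e e' : G.edgeSet, e ≠ e' → (∃ v, v ∈ (e : Sym2 V) ∧ v ∈ (e' : Sym2 V)) →
      ((f e - f e').natAbs ≤ k)}

/-- The bandwidth of a finite simple graph: the minimum over injective integer
labelings of the vertices of the maximum difference of labels on adjacent vertices. -/
noncomputable def bw {V : Type*} [Fintype V] (G : SimpleGraph V) : ℕ :=
  sInf {k : ℕ | ∃ g : V → ℤ, Function.Injective g ∧
    ∀ u v, G.Adj u v → (g u - g v).natAbs ≤ k}
/-- Vertex type for the theta graph $\Theta(3,\dots,3,1)$: the endpoints $u,v$ plus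
two internal vertices on each of the $m-1$ paths of length 3. -/
abbrev ThetaVert (m : ℕ) := Unit ⊕ (Unit ⊕ (Fin (m - 1) × Fin 2))

/-- The theta graph consisting of $m-1$ internally disjoint paths of length 3
together with one edge, all joining the same pair of vertices $u,v$. -/
def thetaGraph (m : ℕ) : SimpleGraph (ThetaVert m) :=
  SimpleGraph.fromEdgeSet
    ({s(Sum.inl (), Sum.inr (Sum.inl ()))} ∪
      ⋃ i : Fin (m - 1),
        {s(Sum.inl (), Sum.inr (Sum.inr (i, 0))),
         s(Sum.inr (Sum.inr (i, 0)), Sum.inr (Sum.inr (i, 1))),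
         s(Sum.inr (Sum.inr (i, 1)), Sum.inr (Sum.inl ()))})

/-!
Index the edges by `Option (ι × Fin 3)`: `none` is the edge `uv` and `some (i, j)` is the `j`-th
edge of the `i`-th path. For the lower bound, the labels at `u` lie in a window `[a, a + k]` and
those at `v` in a window `[b, b + k]`, say with `a ≤ b`. Every label lies in `[a, b + k]` except
those of middle edges escaping it, and each escaping middle edge has a neighbour on its path whose
label is forced into `[b, a + k]`, as is the label of `uv`. The two windows have `2k + 2` points
in total, so `3n + 2 ≤ 2k + 2`.
-/

open Function Finset

def IncidenceBounded {α V : Type*} (E : α → Sym2 V) (g : α → ℤ) (k : ℕ) : Prop :=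
  ∀ x y, x ≠ y → (∃ v, v ∈ E x ∧ v ∈ E y) → (g x - g y).natAbs ≤ k

theorem IncidenceBounded.natAbs_sub_le {α V : Type*} {E : α → Sym2 V} {g : α → ℤ} {k : ℕ}
    (h : IncidenceBounded E g k) {x y : α} {v : V} (hx : v ∈ E x) (hy : v ∈ E y) :
    (g x - g y).natAbs ≤ k := by
  rcases eq_or_ne x y with rfl | hxy
  · simp
  · exact h x y hxy ⟨v, hx, hy⟩

theorem edgeBW_eq_sInf_of_range_eq {α V : Type*} [Fintype V] {G : SimpleGraph V}
    {E : α → Sym2 V} (hE : Injective E) (hrange : Set.range E = G.edgeSet) :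
    edgeBW G = sInf {k | ∃ g : α → ℤ, Injective g ∧ IncidenceBounded E g k} := by
  let φ : α ≃ G.edgeSet := (Equiv.ofInjective E hE).trans (Equiv.setCongr hrange)
  have hφ x : (φ x : Sym2 V) = E x := rfl
  unfold edgeBW
  congr 1
  ext k
  constructor
  · rintro ⟨f, hf, hk⟩
    refine ⟨f ∘ φ, hf.comp φ.injective, fun x y hxy hv => hk _ _ (φ.injective.ne hxy) ?_⟩
    simpa only [hφ] using hv
  · rintro ⟨g, hg, hk⟩
    refine ⟨g ∘ φ.symm, hg.comp φ.symm.injective,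
      fun e e' he hv => hk _ _ (φ.symm.injective.ne he) ?_⟩
    simpa only [← hφ, Equiv.apply_symm_apply] using hv

theorem exists_forall_mem_Icc_of_natAbs_sub_le {α : Type*} [Finite α] {S : Set α}
    (hS : S.Nonempty) (g : α → ℤ) {k : ℕ} (h : ∀ x ∈ S, ∀ y ∈ S, (g x - g y).natAbs ≤ k) :
    ∃ a : ℤ, ∀ x ∈ S, g x ∈ Set.Icc a (a + k) := by
  obtain ⟨x₀, hx₀, hmin⟩ := S.exists_min_image g S.toFinite hS
  exact ⟨g x₀, fun x hx => ⟨hmin x hx, by have := h x hx x₀ hx₀; omega⟩⟩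

section ThetaEdge

variable {ι : Type*}

def thetaEdge : Option (ι × Fin 3) → Sym2 (Unit ⊕ (Unit ⊕ (ι × Fin 2)))
  | none => s(Sum.inl (), Sum.inr (Sum.inl ()))
  | some (i, 0) => s(Sum.inl (), Sum.inr (Sum.inr (i, 0)))
  | some (i, 1) => s(Sum.inr (Sum.inr (i, 0)), Sum.inr (Sum.inr (i, 1)))
  | some (i, 2) => s(Sum.inr (Sum.inr (i, 1)), Sum.inr (Sum.inl ()))

theorem thetaEdge_injective : Injective (thetaEdge (ι := ι)) := by
  rintro (_ | ⟨i, j⟩) (_ | ⟨i', j'⟩) h <;> (try fin_cases j) <;> (try fin_cases j') <;>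
    simp_all [thetaEdge]

theorem range_thetaEdge (m : ℕ) : Set.range thetaEdge = (thetaGraph m).edgeSet := by
  ext e
  simp only [thetaGraph, edgeSet_fromEdgeSet, Set.mem_sdiff, Set.mem_union, Set.mem_singleton_iff,
    Set.mem_iUnion, Set.mem_insert_iff, Set.mem_range]
  constructor
  · rintro ⟨_ | ⟨i, j⟩, rfl⟩ <;> (try fin_cases j) <;> simp [thetaEdge]
  · rintro ⟨rfl | ⟨i, rfl | rfl | rfl⟩, -⟩
    exacts [⟨none, rfl⟩, ⟨some (i, 0), rfl⟩, ⟨some (i, 1), rfl⟩, ⟨some (i, 2), rfl⟩]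

theorem inl_mem_thetaEdge_iff {x : Option (ι × Fin 3)} :
    Sum.inl () ∈ thetaEdge x ↔ x = none ∨ ∃ i, x = some (i, 0) := by
  rcases x with _ | ⟨i, j⟩ <;> (try fin_cases j) <;> simp [thetaEdge]

theorem inr_inl_mem_thetaEdge_iff {x : Option (ι × Fin 3)} :
    Sum.inr (Sum.inl ()) ∈ thetaEdge x ↔ x = none ∨ ∃ i, x = some (i, 2) := by
  rcases x with _ | ⟨i, j⟩ <;> (try fin_cases j) <;> simp [thetaEdge]

theorem inr_inr_mem_thetaEdge_iff {x : Option (ι × Fin 3)} {i : ι} {a : Fin 2} :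
    Sum.inr (Sum.inr (i, a)) ∈ thetaEdge x ↔ x = some (i, a.castSucc) ∨ x = some (i, a.succ) := by
  rcases x with _ | ⟨i', j⟩ <;> (try fin_cases j) <;> fin_cases a <;> simp [thetaEdge, eq_comm]

variable [Fintype ι]

theorem three_mul_card_le_two_mul_of_windows {g : Option (ι × Fin 3) → ℤ} (hg : Injective g)
    {k : ℕ} {a b : ℤ} {p q : Fin 3} (hpq : ∀ j : Fin 3, j = p ∨ j = 1 ∨ j = q) (hab : a ≤ b)
    (hp : ∀ i, g (some (i, p)) ∈ Set.Icc a (a + k))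
    (hq : ∀ i, g (some (i, q)) ∈ Set.Icc b (b + k)) (ht : g none ∈ Set.Icc b (a + k))
    (hmp : ∀ i, g (some (i, 1)) ≤ g (some (i, p)) + k)
    (hmq : ∀ i, g (some (i, q)) ≤ g (some (i, 1)) + k) :
    3 * Fintype.card ι ≤ 2 * k := by
  classical
  let out := univ.filter fun i => g (some (i, 1)) ∉ Icc a (b + k)
  have hcover : univ.image g ⊆ Icc a (b + k) ∪ out.image fun i => g (some (i, 1)) := by
    rintro _ hx
    obtain ⟨_ | ⟨i, j⟩, -, rfl⟩ := mem_image.1 hx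
    · exact mem_union_left _ (mem_Icc.2 ⟨by linarith [ht.1], ht.2.trans (by linarith)⟩)
    · rcases hpq j with rfl | rfl | rfl
      · exact mem_union_left _ (mem_Icc.2 ⟨(hp i).1, (hp i).2.trans (by linarith)⟩)
      · by_cases hi : g (some (i, 1)) ∈ Icc a (b + k)
        · exact mem_union_left _ hi
        · exact mem_union_right _ (mem_image_of_mem _ (mem_filter.2 ⟨mem_univ _, hi⟩))
      · exact mem_union_left _ (mem_Icc.2 ⟨hab.trans (hq i).1, (hq i).2⟩)
  let partner (i : ι) : Option (ι × Fin 3) := some (i, if g (some (i, 1)) < a then q else p)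
  have hpartner : Injective partner := fun i j h => by
    simpa [partner] using congrArg (Option.map Prod.fst) h
  have hsqueeze : Set.MapsTo g ↑(insert none (out.image partner)) ↑(Icc b (a + k)) := by
    intro x hx
    simp only [coe_insert, coe_image, Set.mem_insert_iff, Set.mem_image, mem_coe] at hx
    rcases hx with rfl | ⟨i, hi, rfl⟩
    · simpa using ht
    · simp only [out, mem_filter, mem_univ, true_and, mem_Icc, not_and_or, not_le] at hi
      simp only [partner, coe_Icc, Set.mem_Icc]
      split_ifs
      · have := hmq i; have := (hq i).1; omega
      · have := hmp i; have := (hp i).2; omega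
  have hin : 3 * Fintype.card ι + 1 ≤ #(Icc a (b + k)) + #out :=
    calc 3 * Fintype.card ι + 1 = #(univ.image g) := by
          rw [card_image_of_injective _ hg, card_univ]; simp [mul_comm]
      _ ≤ _ := card_le_card hcover
      _ ≤ _ := card_union_le _ _
      _ ≤ _ := by gcongr; exact card_image_le
  have hout : #out + 1 ≤ #(Icc b (a + k)) :=
    calc #out + 1 = #(insert none (out.image partner)) := by
          rw [card_insert_of_notMem (by simp [partner]), card_image_of_injective _ hpartner]
      _ ≤ _ := card_le_card_of_injOn g hsqueeze hg.injOn
  rw [Int.card_Icc] at hin hout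
  omega

theorem three_mul_card_le_two_mul_of_incidenceBounded {g : Option (ι × Fin 3) → ℤ}
    (hg : Injective g) {k : ℕ} (h : IncidenceBounded thetaEdge g k) :
    3 * Fintype.card ι ≤ 2 * k := by
  obtain ⟨a, ha⟩ := exists_forall_mem_Icc_of_natAbs_sub_le
    (S := {x | Sum.inl () ∈ thetaEdge x}) ⟨none, by simp [thetaEdge]⟩ g
    fun x hx y hy => h.natAbs_sub_le hx hy
  obtain ⟨b, hb⟩ := exists_forall_mem_Icc_of_natAbs_sub_le
    (S := {x | Sum.inr (Sum.inl ()) ∈ thetaEdge x}) ⟨none, by simp [thetaEdge]⟩ g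
    fun x hx y hy => h.natAbs_sub_le hx hy
  have hp i : g (some (i, 0)) ∈ Set.Icc a (a + k) := ha _ (by simp [thetaEdge])
  have hq i : g (some (i, 2)) ∈ Set.Icc b (b + k) := hb _ (by simp [thetaEdge])
  have hta : g none ∈ Set.Icc a (a + k) := ha _ (by simp [thetaEdge])
  have htb : g none ∈ Set.Icc b (b + k) := hb _ (by simp [thetaEdge])
  have hmp i : (g (some (i, 1)) - g (some (i, 0))).natAbs ≤ k :=
    h.natAbs_sub_le (v := Sum.inr (Sum.inr (i, 0))) (by simp [thetaEdge]) (by simp [thetaEdge])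
  have hmq i : (g (some (i, 1)) - g (some (i, 2))).natAbs ≤ k :=
    h.natAbs_sub_le (v := Sum.inr (Sum.inr (i, 1))) (by simp [thetaEdge]) (by simp [thetaEdge])
  rcases le_total a b with hab | hba
  · exact three_mul_card_le_two_mul_of_windows hg (by decide) hab hp hq ⟨htb.1, hta.2⟩
      (fun i => by have := hmp i; omega) (fun i => by have := hmq i; omega)
  · exact three_mul_card_le_two_mul_of_windows hg (by decide) hba hq hp ⟨hta.1, htb.2⟩
      (fun i => by have := hmq i; omega) (fun i => by have := hmp i; omega)

end ThetaEdge

/-- The first `h` paths take the labels below `3 * h`, in blocks: middle edges, `u`-edges,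
`v`-edges. The edge `uv` gets `3 * h`, and the remaining paths follow in blocks: `u`-edges,
`v`-edges, middle edges. -/
def thetaLabel (n h : ℕ) : Option (Fin n × Fin 3) → ℤ
  | none => 3 * h
  | some (i, 0) => if (i : ℕ) < h then h + i else 2 * h + 1 + i
  | some (i, 1) => if (i : ℕ) < h then i else 2 * n + 1 + i
  | some (i, 2) => if (i : ℕ) < h then 2 * h + i else n + h + 1 + i

theorem thetaLabel_injective (n h : ℕ) : Injective (thetaLabel n h) := by
  rintro (_ | ⟨i, j⟩) (_ | ⟨i', j'⟩) hij <;> (try fin_cases j) <;> (try fin_cases j') <;>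
    simp only [thetaLabel] at hij <;>
    simp only [reduceCtorEq, Option.some.injEq, Prod.mk.injEq, and_true, Fin.ext_iff] <;>
    split_ifs at hij <;> omega

theorem incidenceBounded_thetaLabel {n h : ℕ} (hh : h ≤ n) (hn : n ≤ 2 * h) :
    IncidenceBounded thetaEdge (thetaLabel n h) (n + h) := by
  rintro x y - ⟨v, hx, hy⟩
  rcases v with ⟨⟩ | ⟨⟩ | ⟨i, a⟩
  · rw [inl_mem_thetaEdge_iff] at hx hy
    rcases hx with rfl | ⟨i, rfl⟩ <;> rcases hy with rfl | ⟨j, rfl⟩ <;> simp only [thetaLabel] <;>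
      (try split_ifs) <;> omega
  · rw [inr_inl_mem_thetaEdge_iff] at hx hy
    rcases hx with rfl | ⟨i, rfl⟩ <;> rcases hy with rfl | ⟨j, rfl⟩ <;> simp only [thetaLabel] <;>
      (try split_ifs) <;> omega
  · rw [inr_inr_mem_thetaEdge_iff] at hx hy
    fin_cases a <;> rcases hx with rfl | rfl <;> rcases hy with rfl | rfl <;>
      simp only [thetaLabel, Fin.zero_eta, Fin.mk_one, Fin.isValue, Fin.castSucc_zero,
        Fin.castSucc_one, Fin.succ_zero_eq_one, Fin.succ_one_eq_two] <;> (try split_ifs) <;> omega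

theorem edgeBW_thetaGraph_general (m : ℕ) :
    edgeBW (thetaGraph m) = (3 * (m - 1) + 1) / 2 := by
  rw [edgeBW_eq_sInf_of_range_eq thetaEdge_injective (range_thetaEdge m),
    show (3 * (m - 1) + 1) / 2 = m - 1 + (m - 1 + 1) / 2 by omega]
  have hupper : m - 1 + (m - 1 + 1) / 2 ∈
      {k | ∃ g : Option (Fin (m - 1) × Fin 3) → ℤ, Injective g ∧ IncidenceBounded thetaEdge g k} :=
    ⟨_, thetaLabel_injective _ _, incidenceBounded_thetaLabel (by omega) (by omega)⟩
  refine le_antisymm (Nat.sInf_le hupper) (le_csInf ⟨_, hupper⟩ ?_)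
  rintro k ⟨g, hg, hk⟩
  have := three_mul_card_le_two_mul_of_incidenceBounded hg hk
  rw [Fintype.card_fin] at this
  omega

theorem edgeBW_thetaGraph (m : ℕ) (hm : 2 ≤ m) :
    edgeBW (thetaGraph m) = (3 * (m - 1) + 1) / 2 :=
  edgeBW_thetaGraph_general m
end

section
/- If G is a finite graph in which every vertex has degree at least 2, then the bandwidth of G is at most the edge-bandwidth of G. -/
/-!
Fix an optimal edge labelling `f`. Minimum degree two gives Hall's condition for assigning
to every vertex `v` its own incident edge `ε v`; among such assignments take one minimising
`∑ v, f (ε v)`, and label `v` by `f (ε v)`. For an edge `a = uv`, either `f (ε u) ≤ f a`, and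
`a`, `ε v` share `v`; or `f a < f (ε u)`, and then minimality forces `a = ε v` (otherwise
reassigning `a` to `u` lowers the sum), while `ε u`, `a` share `u`. Either way
`f (ε u) - f (ε v) ≤ B'(G)`.
-/
open SimpleGraph

namespace SimpleGraph

variable {V : Type*} {G : SimpleGraph V}

def IncidentDiffLE (G : SimpleGraph V) (f : G.edgeSet → ℤ) (k : ℕ) : Prop :=
  ∀ e e' : G.edgeSet, e ≠ e' → (∃ v, v ∈ (e : Sym2 V) ∧ v ∈ (e' : Sym2 V)) →
    (f e - f e').natAbs ≤ k

def IsIncidentInjection (G : SimpleGraph V) (ε : V → G.edgeSet) : Prop :=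
  Function.Injective ε ∧ ∀ v, v ∈ (ε v : Sym2 V)

theorem exists_injective_mem_incidenceSet [LocallyFinite G] (h : ∀ v, 2 ≤ G.degree v) :
    ∃ ε : V → Sym2 V, Function.Injective ε ∧ ∀ v, ε v ∈ G.incidenceSet v := by
  classical
  suffices hall : ∀ s : Finset V, s.card ≤ (s.biUnion (G.incidenceFinset ·)).card by
    obtain ⟨ε, hinj, hε⟩ :=
      (Finset.all_card_le_biUnion_card_iff_exists_injective (G.incidenceFinset ·)).mp hall
    exact ⟨ε, hinj, fun v => (G.mem_incidenceFinset v _).mp (hε v)⟩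
  intro s
  -- each vertex lies on at least two edges, and each edge contains at most two vertices
  have hcount := Finset.card_mul_le_card_mul (fun v (e : Sym2 V) => v ∈ e) (m := 2) (n := 2)
    (s := s) (t := s.biUnion (G.incidenceFinset ·)) ?_ ?_
  · omega
  · intro v hv
    calc 2 ≤ (G.incidenceFinset v).card :=
          (h v).trans_eq (G.card_incidenceFinset_eq_degree v).symm
      _ ≤ _ := Finset.card_le_card fun e he => Finset.mem_filter.mpr
          ⟨Finset.mem_biUnion.mpr ⟨v, hv, he⟩, ((G.mem_incidenceFinset v e).mp he).2⟩
  · intro e _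
    induction e using Sym2.ind with
    | h x y =>
      calc _ ≤ ({x, y} : Finset V).card := Finset.card_le_card fun v hv => by
            simpa [Finset.bipartiteBelow] using (Finset.mem_filter.mp hv).2
        _ ≤ 2 := Finset.card_le_two

theorem exists_isIncidentInjection [LocallyFinite G] (h : ∀ v, 2 ≤ G.degree v) :
    ∃ ε, G.IsIncidentInjection ε := by
  obtain ⟨ε, hinj, hε⟩ := exists_injective_mem_incidenceSet h
  exact ⟨fun v => ⟨ε v, G.incidenceSet_subset v (hε v)⟩,
    fun _ _ huv => hinj (congrArg Subtype.val huv), fun v => (hε v).2⟩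

theorem IsIncidentInjection.update [DecidableEq V] {ε : V → G.edgeSet}
    (hε : G.IsIncidentInjection ε) {v : V} {a : G.edgeSet} (hva : v ∈ (a : Sym2 V))
    (ha : a ∉ Set.range ε) : G.IsIncidentInjection (Function.update ε v a) := by
  refine ⟨fun x y hxy => ?_, fun w => ?_⟩
  · by_cases hx : x = v <;> by_cases hy : y = v <;>
      simp_all [Function.update_of_ne, hε.1.eq_iff]
  · rcases eq_or_ne w v with rfl | hw
    · simpa using hva
    · simpa [Function.update_of_ne hw] using hε.2 w

variable [Fintype V]

theorem exists_isIncidentInjection_isMinOn (f : G.edgeSet → ℤ)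
    (hne : ∃ ε, G.IsIncidentInjection ε) :
    ∃ ε, G.IsIncidentInjection ε ∧
      IsMinOn (fun ε => ∑ v, f (ε v)) {ε | G.IsIncidentInjection ε} ε := by
  obtain ⟨ε, hε, hmin⟩ := Set.exists_min_image {ε | G.IsIncidentInjection ε}
    (fun ε => ∑ v, f (ε v)) (Set.toFinite _) hne
  exact ⟨ε, hε, isMinOn_iff.mpr hmin⟩

theorem IsIncidentInjection.mem_range_of_lt {f : G.edgeSet → ℤ} {ε : V → G.edgeSet}
    (hε : G.IsIncidentInjection ε)
    (hmin : IsMinOn (fun ε => ∑ v, f (ε v)) {ε | G.IsIncidentInjection ε} ε)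
    {v : V} {a : G.edgeSet} (hva : v ∈ (a : Sym2 V)) (hlt : f a < f (ε v)) :
    a ∈ Set.range ε := by
  classical
  by_contra ha
  have hle : ∑ w, f (ε w) ≤ ∑ w, f (Function.update ε v a w) := hmin (hε.update hva ha)
  simp only [← Function.comp_apply (f := f), Function.comp_update,
    Finset.sum_update_of_mem (Finset.mem_univ v)] at hle
  rw [Finset.sum_eq_add_sum_sdiff_singleton_of_mem (Finset.mem_univ v)] at hle
  simp only [Function.comp_apply] at hle
  omega

theorem IsIncidentInjection.sub_le_of_adj {k : ℕ} {f : G.edgeSet → ℤ}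
    (hf : G.IncidentDiffLE f k)
    {ε : V → G.edgeSet} (hε : G.IsIncidentInjection ε)
    (hmin : IsMinOn (fun ε => ∑ v, f (ε v)) {ε | G.IsIncidentInjection ε} ε)
    {u v : V} (huv : G.Adj u v) : f (ε u) - f (ε v) ≤ k := by
  obtain ⟨a, ha⟩ : ∃ a : G.edgeSet, (a : Sym2 V) = s(u, v) := ⟨⟨s(u, v), huv⟩, rfl⟩
  have hua : u ∈ (a : Sym2 V) := ha ▸ Sym2.mem_mk_left u v
  have hva : v ∈ (a : Sym2 V) := ha ▸ Sym2.mem_mk_right u v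
  rcases le_or_gt (f (ε u)) (f a) with hle | hlt
  · rcases eq_or_ne (ε v) a with heq | hne
    · rw [heq]
      omega
    · have := hf (ε v) a hne ⟨v, hε.2 v, hva⟩
      omega
  · have hne : ε u ≠ a := fun h => (h ▸ hlt).false
    -- `a` is assigned to one of its ends, which cannot be `u`
    obtain ⟨w, rfl⟩ := hε.mem_range_of_lt hmin hua hlt
    obtain rfl | rfl := Sym2.mem_iff.mp (ha ▸ hε.2 w)
    · exact absurd rfl hne
    · have := hf (ε u) (ε w) hne ⟨u, hε.2 u, hua⟩
      omega

end SimpleGraph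

theorem exists_incidentDiffLE_edgeBW {V : Type*} [Fintype V] (G : SimpleGraph V) :
    ∃ f : G.edgeSet → ℤ, Function.Injective f ∧ G.IncidentDiffLE f (edgeBW G) := by
  obtain ⟨n, ⟨σ⟩⟩ := Finite.exists_equiv_fin G.edgeSet
  refine Nat.sInf_mem (s := {k | ∃ f, Function.Injective f ∧ G.IncidentDiffLE f k})
    ⟨n, fun e => σ e, Nat.cast_injective.comp (Fin.val_injective.comp σ.injective),
      fun e e' _ _ => ?_⟩
  dsimp only
  omega

theorem bw_le_edgeBW_of_minDegree_two {V : Type*} [Fintype V] (G : SimpleGraph V)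
    [DecidableRel G.Adj] (h : ∀ v, 2 ≤ G.degree v) :
    bw G ≤ edgeBW G := by
  obtain ⟨f, hf_inj, hf⟩ := exists_incidentDiffLE_edgeBW G
  obtain ⟨ε, hε, hmin⟩ := exists_isIncidentInjection_isMinOn f (exists_isIncidentInjection h)
  refine Nat.sInf_le ⟨fun v => f (ε v), hf_inj.comp hε.1, fun u v huv => ?_⟩
  have := hε.sub_le_of_adj hf hmin huv
  have := hε.sub_le_of_adj hf hmin huv.symm
  show (f (ε u) - f (ε v)).natAbs ≤ _
  omega
end

section
/- If G is a caterpillar with at least one edge, then its edge-bandwidth equals \Delta(G) - 1. -/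
open SimpleGraph

/-- A graph is a path graph if its vertices can be linearly ordered so that
adjacency holds exactly between consecutive vertices. -/
def IsPathGraph {V : Type*} (G : SimpleGraph V) : Prop :=
  ∃ (n : ℕ) (e : V ≃ Fin n), ∀ a b, G.Adj a b ↔
    ((e a : ℕ) + 1 = (e b : ℕ) ∨ (e b : ℕ) + 1 = (e a : ℕ))

/-- A caterpillar is a tree in which deleting all leaves (degree-one vertices)
yields a path (possibly empty or a single vertex). -/
def IsCaterpillar {V : Type*} [Fintype V] (G : SimpleGraph V) : Prop :=
  G.IsTree ∧ IsPathGraph (G.induce {v : V | 2 ≤ (G.neighborSet v).ncard})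


section EdgeBWAux

open Finset

variable {V : Type*} [Fintype V] [DecidableEq V] (G : SimpleGraph V) [DecidableRel G.Adj]

/-- index of a vertex along the spine (0 for non-spine vertices) -/
noncomputable def spIdx {n : ℕ} (es : {v : V | 2 ≤ (G.neighborSet v).ncard} ≃ Fin n) (v : V) : ℕ :=
  if h : v ∈ {v : V | 2 ≤ (G.neighborSet v).ncard} then (es ⟨v, h⟩ : ℕ) else 0

noncomputable def pairm {n : ℕ} (es : {v : V | 2 ≤ (G.neighborSet v).ncard} ≃ Fin n)
    (u w : V) : ℕ :=
  if 2 ≤ (G.neighborSet u).ncard then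
    (if 2 ≤ (G.neighborSet w).ncard then 3 * min (spIdx G es u) (spIdx G es w) + 2
     else 3 * spIdx G es u + 1)
  else
    (if 2 ≤ (G.neighborSet w).ncard then 3 * spIdx G es w + 1 else 0)

lemma pairm_symm {n : ℕ} (es : {v : V | 2 ≤ (G.neighborSet v).ncard} ≃ Fin n) (u w : V) :
    pairm G es u w = pairm G es w u := by
  unfold pairm
  split_ifs <;> simp [min_comm]

noncomputable def mval {n : ℕ} (es : {v : V | 2 ≤ (G.neighborSet v).ncard} ≃ Fin n) :
    Sym2 V → ℕ :=
  Sym2.lift ⟨pairm G es, pairm_symm G es⟩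

lemma mval_mk {n : ℕ} (es : {v : V | 2 ≤ (G.neighborSet v).ncard} ≃ Fin n) (u w : V) :
    mval G es s(u, w) = pairm G es u w := rfl

lemma spIdx_mem {n : ℕ} (es : {v : V | 2 ≤ (G.neighborSet v).ncard} ≃ Fin n) (v : V)
    (hv : v ∈ {v : V | 2 ≤ (G.neighborSet v).ncard}) : spIdx G es v = (es ⟨v, hv⟩ : ℕ) := by
  simp [spIdx, hv]

lemma spIdx_inj {n : ℕ} (es : {v : V | 2 ≤ (G.neighborSet v).ncard} ≃ Fin n) (u w : V)
    (hu : u ∈ {v : V | 2 ≤ (G.neighborSet v).ncard})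
    (hw : w ∈ {v : V | 2 ≤ (G.neighborSet v).ncard})
    (h : spIdx G es u = spIdx G es w) : u = w := by
  rw [spIdx_mem G es u hu, spIdx_mem G es w hw] at h
  have := es.injective (Fin.val_injective h)
  exact congrArg Subtype.val this

lemma adj_consec {n : ℕ} (es : {v : V | 2 ≤ (G.neighborSet v).ncard} ≃ Fin n)
    (hes : ∀ a b, (G.induce {v : V | 2 ≤ (G.neighborSet v).ncard}).Adj a b ↔
      ((es a : ℕ) + 1 = (es b : ℕ) ∨ (es b : ℕ) + 1 = (es a : ℕ)))
    (u w : V) (hu : u ∈ {v : V | 2 ≤ (G.neighborSet v).ncard})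
    (hw : w ∈ {v : V | 2 ≤ (G.neighborSet v).ncard}) (hadj : G.Adj u w) :
    spIdx G es u + 1 = spIdx G es w ∨ spIdx G es w + 1 = spIdx G es u := by
  have h := (hes ⟨u, hu⟩ ⟨w, hw⟩).mp hadj
  rw [spIdx_mem G es u hu, spIdx_mem G es w hw]
  exact h

lemma keyform {n : ℕ} (es : {v : V | 2 ≤ (G.neighborSet v).ncard} ≃ Fin n)
    (hes : ∀ a b, (G.induce {v : V | 2 ≤ (G.neighborSet v).ncard}).Adj a b ↔
      ((es a : ℕ) + 1 = (es b : ℕ) ∨ (es b : ℕ) + 1 = (es a : ℕ)))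
    (e : Sym2 V) (he : e ∈ G.edgeSet) :
    (mval G es e = 0) ∨
    (∃ s w, e = s(s, w) ∧ s ∈ {v : V | 2 ≤ (G.neighborSet v).ncard} ∧
      w ∉ {v : V | 2 ≤ (G.neighborSet v).ncard} ∧ mval G es e = 3 * spIdx G es s + 1) ∨
    (∃ p q, e = s(p, q) ∧ p ∈ {v : V | 2 ≤ (G.neighborSet v).ncard} ∧
      q ∈ {v : V | 2 ≤ (G.neighborSet v).ncard} ∧ spIdx G es p + 1 = spIdx G es q ∧
      mval G es e = 3 * spIdx G es p + 2) := by
  induction e with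
  | _ u w =>
    have hadj : G.Adj u w := he
    by_cases hu : 2 ≤ (G.neighborSet u).ncard <;> by_cases hw : 2 ≤ (G.neighborSet w).ncard
    · rcases adj_consec G es hes u w hu hw hadj with hc | hc
      · refine Or.inr (Or.inr ⟨u, w, rfl, hu, hw, hc, ?_⟩)
        rw [mval_mk]; unfold pairm
        rw [if_pos hu, if_pos hw, min_eq_left (by omega)]
      · refine Or.inr (Or.inr ⟨w, u, Sym2.eq_swap, hw, hu, hc, ?_⟩)
        rw [mval_mk]; unfold pairm
        rw [if_pos hu, if_pos hw, min_eq_right (by omega)]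
    · refine Or.inr (Or.inl ⟨u, w, rfl, hu, hw, ?_⟩)
      rw [mval_mk]; unfold pairm; rw [if_pos hu, if_neg hw]
    · refine Or.inr (Or.inl ⟨w, u, Sym2.eq_swap, hw, hu, ?_⟩)
      rw [mval_mk]; unfold pairm; rw [if_neg hu, if_pos hw]
    · refine Or.inl ?_
      rw [mval_mk]; unfold pairm; rw [if_neg hu, if_neg hw]

lemma at_v {n : ℕ} (es : {v : V | 2 ≤ (G.neighborSet v).ncard} ≃ Fin n)
    (hes : ∀ a b, (G.induce {v : V | 2 ≤ (G.neighborSet v).ncard}).Adj a b ↔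
      ((es a : ℕ) + 1 = (es b : ℕ) ∨ (es b : ℕ) + 1 = (es a : ℕ)))
    (v : V) (hvS : v ∈ {v : V | 2 ≤ (G.neighborSet v).ncard})
    (e : Sym2 V) (he : e ∈ G.edgeSet) (hv : v ∈ e) :
    mval G es e = 3 * spIdx G es v + 1 ∨ mval G es e = 3 * spIdx G es v + 2 ∨
    ∃ j, j + 1 = spIdx G es v ∧ mval G es e = 3 * j + 2 := by
  rcases keyform G es hes e he with h0 | ⟨s, w, rfl, hs, hw, hm⟩ | ⟨p, q, rfl, hp, hq, hpq, hm⟩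
  · exfalso
    induction e with
    | _ u w =>
      have hadj : G.Adj u w := he
      rw [mval_mk] at h0; unfold pairm at h0
      rcases Sym2.mem_iff.mp hv with rfl | rfl
      · split_ifs at h0 with h1 h2 h2 <;> first | exact h1 hvS | omega
      · split_ifs at h0 with h1 h2 h2 <;> first | exact h2 hvS | exact hw hvS | omega
  · rcases Sym2.mem_iff.mp hv with rfl | rfl
    · exact Or.inl hm
    · exact absurd hvS hw
  · rcases Sym2.mem_iff.mp hv with rfl | rfl
    · exact Or.inr (Or.inl hm)
    · exact Or.inr (Or.inr ⟨spIdx G es p, hpq, hm⟩)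

lemma between {n : ℕ} (es : {v : V | 2 ≤ (G.neighborSet v).ncard} ≃ Fin n)
    (hes : ∀ a b, (G.induce {v : V | 2 ≤ (G.neighborSet v).ncard}).Adj a b ↔
      ((es a : ℕ) + 1 = (es b : ℕ) ∨ (es b : ℕ) + 1 = (es a : ℕ)))
    (v : V) (hvS : v ∈ {v : V | 2 ≤ (G.neighborSet v).ncard})
    (e e' e'' : Sym2 V) (he : e ∈ G.edgeSet) (he' : e' ∈ G.edgeSet) (he'' : e'' ∈ G.edgeSet)
    (hv : v ∈ e) (hv' : v ∈ e')
    (h1 : mval G es e' ≤ mval G es e'') (h2 : mval G es e'' ≤ mval G es e) :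
    v ∈ e'' := by
  set i := spIdx G es v with hi
  have hup : mval G es e ≤ 3 * i + 2 := by
    rcases at_v G es hes v hvS e he hv with h | h | ⟨j, hj, h⟩ <;> omega
  have hlow : 1 ≤ mval G es e' ∧ 3 * i ≤ mval G es e' + 1 := by
    rcases at_v G es hes v hvS e' he' hv' with h | h | ⟨j, hj, h⟩ <;> omega
  rcases keyform G es hes e'' he'' with h0 | ⟨s, w, rfl, hs, hw, hm⟩ | ⟨p, q, rfl, hp, hq, hpq, hm⟩
  · omega
  · have : spIdx G es s = i := by omega
    rw [spIdx_inj G es s v hs hvS this]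
    exact Sym2.mem_mk_left v w
  · have : spIdx G es p = i ∨ spIdx G es p + 1 = i := by omega
    rcases this with h | h
    · rw [spIdx_inj G es p v hp hvS h]
      exact Sym2.mem_mk_left v q
    · have hq' : spIdx G es q = i := by omega
      rw [spIdx_inj G es q v hq hvS hq']
      exact Sym2.mem_mk_right p v

lemma card_incident (v : V) :
    (Finset.univ.filter fun e : G.edgeSet => v ∈ (e : Sym2 V)).card = G.degree v := by
  rw [← G.card_incidenceFinset_eq_degree v]
  refine Finset.card_bij (fun e _ => (e : Sym2 V)) ?_ ?_ ?_
  · intro e he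
    rw [mem_incidenceFinset]
    exact ⟨e.2, by simpa using he⟩
  · intro a _ b _ h
    exact Subtype.ext h
  · intro x hx
    rw [mem_incidenceFinset] at hx
    exact ⟨⟨x, hx.1⟩, by simpa using hx.2, rfl⟩

lemma key_mono_aux {a b x y M : ℕ} (hy : y < M) (h : a * M + x ≤ b * M + y) : a ≤ b := by
  by_contra hc
  push_neg at hc
  have h2 : (b + 1) * M ≤ a * M := Nat.mul_le_mul_right M hc
  have h3 : b * M + M ≤ a * M := by rw [add_one_mul] at h2; omega
  omega

lemma upper_bound {n : ℕ} (es : {v : V | 2 ≤ (G.neighborSet v).ncard} ≃ Fin n)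
    (hes : ∀ a b, (G.induce {v : V | 2 ≤ (G.neighborSet v).ncard}).Adj a b ↔
      ((es a : ℕ) + 1 = (es b : ℕ) ∨ (es b : ℕ) + 1 = (es a : ℕ))) :
    ∃ f : G.edgeSet → ℤ, Function.Injective f ∧
      ∀ e e' : G.edgeSet, e ≠ e' → (∃ v, v ∈ (e : Sym2 V) ∧ v ∈ (e' : Sym2 V)) →
        ((f e - f e').natAbs ≤ G.maxDegree - 1) := by
  classical
  set M : ℕ := Fintype.card G.edgeSet + 1 with hM
  set eid : G.edgeSet → ℕ := fun e => (Fintype.equivFin G.edgeSet e : ℕ) with heid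
  have heidlt : ∀ e, eid e < M := fun e => Nat.lt_succ_of_lt (Fintype.equivFin G.edgeSet e).2
  have heidinj : Function.Injective eid := fun a b h =>
    (Fintype.equivFin G.edgeSet).injective (Fin.val_injective h)
  set K : G.edgeSet → ℕ := fun e => mval G es (e : Sym2 V) * M + eid e with hK
  have hKinj : Function.Injective K := by
    intro a b h
    have h1 : mval G es (a : Sym2 V) ≤ mval G es (b : Sym2 V) :=
      key_mono_aux (heidlt b) h.le
    have h2 : mval G es (b : Sym2 V) ≤ mval G es (a : Sym2 V) :=
      key_mono_aux (heidlt a) h.ge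
    have : eid a = eid b := by
      have hmeq := le_antisymm h1 h2
      simp only [hK] at h
      rw [hmeq] at h
      omega
    exact heidinj this
  set f : G.edgeSet → ℤ := fun e => ((Finset.univ.filter fun e'' => K e'' < K e).card : ℤ)
    with hf
  have hmono : ∀ a b : G.edgeSet, K a < K b →
      (Finset.univ.filter fun e'' => K e'' < K a).card <
      (Finset.univ.filter fun e'' => K e'' < K b).card := by
    intro a b hab
    apply Finset.card_lt_card
    constructor
    · intro x hx
      simp only [Finset.mem_filter, Finset.mem_univ, true_and] at hx ⊢
      omega
    · intro hsub
      have : a ∈ Finset.univ.filter fun e'' => K e'' < K b := by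
        simp only [Finset.mem_filter, Finset.mem_univ, true_and]; exact hab
      have := hsub this
      simp only [Finset.mem_filter, Finset.mem_univ, true_and] at this
      omega
  refine ⟨f, ?_, ?_⟩
  · intro a b hab
    rcases lt_trichotomy (K a) (K b) with h | h | h
    · exact absurd hab (by have := hmono a b h; simp only [hf]; intro hc; omega)
    · exact hKinj h
    · exact absurd hab (by have := hmono b a h; simp only [hf]; intro hc; omega)
  · intro e e' hne ⟨v, hv, hv'⟩
    -- v is a spine vertex
    obtain ⟨a, ha⟩ := Sym2.mem_iff_exists.mp hv
    obtain ⟨b, hb⟩ := Sym2.mem_iff_exists.mp hv'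
    have hadja : G.Adj v a := by have := e.2; rw [ha] at this; exact this
    have hadjb : G.Adj v b := by have := e'.2; rw [hb] at this; exact this
    have hab : a ≠ b := by
      intro h
      apply hne
      apply Subtype.ext
      rw [ha, hb, h]
    have hvS : v ∈ {v : V | 2 ≤ (G.neighborSet v).ncard} := by
      have : 1 < (G.neighborSet v).ncard := by
        rw [Set.one_lt_ncard_iff (Set.toFinite _)]
        exact ⟨a, b, hadja, hadjb, hab⟩
      exact this
    -- main asymmetric claim
    have main : ∀ e e' : G.edgeSet, v ∈ (e : Sym2 V) → v ∈ (e' : Sym2 V) → K e' < K e →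
        (f e - f e').natAbs ≤ G.maxDegree - 1 := by
      intro e e' hv hv' hKlt
      set A := Finset.univ.filter fun e'' => K e'' < K e with hA
      set B := Finset.univ.filter fun e'' => K e'' < K e' with hB
      have hBA : B ⊆ A := by
        intro x hx
        simp only [hA, hB, Finset.mem_filter, Finset.mem_univ, true_and] at hx ⊢
        omega
      have hfe : f e = (A.card : ℤ) := by simp only [hf, hA]
      have hfe' : f e' = (B.card : ℤ) := by simp only [hf, hB]
      have hle : B.card ≤ A.card := Finset.card_le_card hBA
      have hcard : (f e - f e').natAbs = (A \ B).card := by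
        rw [Finset.card_sdiff_of_subset hBA, hfe, hfe']
        omega
      rw [hcard]
      set I := Finset.univ.filter (fun e'' : G.edgeSet => v ∈ (e'' : Sym2 V)) with hI
      have heI : e ∈ I := by simp only [hI, Finset.mem_filter, Finset.mem_univ, true_and]; exact hv
      have hsub : A \ B ⊆ I.erase e := by
        intro x hx
        simp only [hA, hB, Finset.mem_sdiff, Finset.mem_filter, Finset.mem_univ, true_and,
          not_lt] at hx
        obtain ⟨hx1, hx2⟩ := hx
        have hm1 : mval G es (e' : Sym2 V) ≤ mval G es (x : Sym2 V) :=
          key_mono_aux (heidlt x) hx2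
        have hm2 : mval G es (x : Sym2 V) ≤ mval G es (e : Sym2 V) :=
          key_mono_aux (heidlt e) hx1.le
        have hvx : v ∈ (x : Sym2 V) :=
          between G es hes v hvS _ _ _ e.2 e'.2 x.2 hv hv' hm1 hm2
        refine Finset.mem_erase.mpr ⟨?_, ?_⟩
        · intro h; rw [h] at hx1; omega
        · simp only [hI, Finset.mem_filter, Finset.mem_univ, true_and]; exact hvx
      calc (A \ B).card ≤ (I.erase e).card := Finset.card_le_card hsub
        _ = I.card - 1 := Finset.card_erase_of_mem heI
        _ = G.degree v - 1 := by rw [hI, card_incident]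
        _ ≤ G.maxDegree - 1 := Nat.sub_le_sub_right (G.degree_le_maxDegree v) 1
    rcases lt_trichotomy (K e') (K e) with h | h | h
    · exact main e e' hv hv' h
    · exact absurd (hKinj h.symm) hne
    · have := main e' e hv' hv h
      omega

lemma lower_bound (hne : G.edgeSet.Nonempty) (k : ℕ)
    (hk : ∃ f : G.edgeSet → ℤ, Function.Injective f ∧
      ∀ e e' : G.edgeSet, e ≠ e' → (∃ v, v ∈ (e : Sym2 V) ∧ v ∈ (e' : Sym2 V)) →
        ((f e - f e').natAbs ≤ k)) :
    G.maxDegree - 1 ≤ k := by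
  classical
  obtain ⟨e₀, he₀⟩ := hne
  obtain ⟨u₀, w₀, rfl⟩ : ∃ u w, e₀ = s(u, w) := by
    induction e₀ with
    | _ u w => exact ⟨u, w, rfl⟩
  have hadj₀ : G.Adj u₀ w₀ := he₀
  haveI : Nonempty V := ⟨u₀⟩
  obtain ⟨v, hv⟩ := G.exists_maximal_degree_vertex
  obtain ⟨f, finj, hf⟩ := hk
  set I := Finset.univ.filter (fun e : G.edgeSet => v ∈ (e : Sym2 V)) with hI
  have hIcard : I.card = G.degree v := card_incident G v
  have hdpos : 0 < G.degree v := by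
    rw [← hv]
    calc 0 < G.degree u₀ := (G.degree_pos_iff_exists_adj u₀).mpr ⟨w₀, hadj₀⟩
      _ ≤ G.maxDegree := G.degree_le_maxDegree u₀
  set T := I.image f with hT
  have hTcard : T.card = G.degree v := by
    rw [hT, Finset.card_image_of_injective I finj, hIcard]
  have hTne : T.Nonempty := by
    rw [← Finset.card_pos, hTcard]; exact hdpos
  set m := T.min' hTne with hm
  have hmT : m ∈ T := T.min'_mem hTne
  obtain ⟨e₂, he₂I, he₂⟩ := Finset.mem_image.mp hmT
  have hsub : T ⊆ Finset.Icc m (m + k) := by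
    intro x hx
    obtain ⟨e₁, he₁I, he₁⟩ := Finset.mem_image.mp hx
    have h1 : m ≤ x := Finset.min'_le T x hx
    rw [Finset.mem_Icc]
    refine ⟨h1, ?_⟩
    by_cases heq : e₁ = e₂
    · rw [← he₁, ← he₂, heq]; omega
    · have hv1 : v ∈ (e₁ : Sym2 V) := by
        simpa only [hI, Finset.mem_filter, Finset.mem_univ, true_and] using he₁I
      have hv2 : v ∈ (e₂ : Sym2 V) := by
        simpa only [hI, Finset.mem_filter, Finset.mem_univ, true_and] using he₂I
      have := hf e₁ e₂ heq ⟨v, hv1, hv2⟩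
      omega
  have hcard : T.card ≤ k + 1 := by
    calc T.card ≤ (Finset.Icc m (m + k)).card := Finset.card_le_card hsub
      _ = k + 1 := by rw [Int.card_Icc]; omega
  have : G.degree v ≤ k + 1 := hTcard ▸ hcard
  omega

end EdgeBWAux
theorem edgeBW_caterpillar {V : Type*} [Fintype V] (G : SimpleGraph V)
    [DecidableRel G.Adj] (hG : IsCaterpillar G) (hne : G.edgeSet.Nonempty) :
    edgeBW G = G.maxDegree - 1 := by
  classical
  obtain ⟨n, es, hes⟩ := hG.2
  obtain ⟨f, hfinj, hfbd⟩ := upper_bound G es hes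
  have hmem : G.maxDegree - 1 ∈ {k : ℕ | ∃ f : G.edgeSet → ℤ, Function.Injective f ∧
      ∀ e e' : G.edgeSet, e ≠ e' → (∃ v, v ∈ (e : Sym2 V) ∧ v ∈ (e' : Sym2 V)) →
        ((f e - f e').natAbs ≤ G.maxDegree - 1)} := ⟨f, hfinj, hfbd⟩
  refine le_antisymm (Nat.sInf_le hmem) (le_csInf ⟨_, hmem⟩ ?_)
  intro k hk
  exact lower_bound G hne k hk
end

section
/- If the edge set of a finite graph G can be partitioned into t forests, then B'(G) \le 2 t B(G) + t - 1. -/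
open SimpleGraph

private lemma getVert_copy' {V : Type*} {G : SimpleGraph V} {u v u' v' : V}
    (p : G.Walk u v) (hu : u = u') (hv : v = v') (n : ℕ) :
    (p.copy hu hv).getVert n = p.getVert n := by subst hu; subst hv; rfl

private lemma key' {V : Type*} {F : SimpleGraph V} (hF : F.IsAcyclic) {u v r : V}
    (h : F.Adj u v) (p : F.Walk u r) (q : F.Walk v r)
    (hp : p.IsPath) (hq : q.IsPath) :
    p.getVert 1 = v ∨ q.getVert 1 = u := by
  classical
  by_cases hv : v ∈ p.support
  · left
    have h1 : (p.takeUntil v hv).IsPath := hp.takeUntil hv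
    have h2 : (⟨p.takeUntil v hv, h1⟩ : F.Path u v)
        = ⟨Walk.cons h Walk.nil, by simp [h.ne]⟩ :=
      isAcyclic_iff_path_unique.mp hF _ _
    have h3 : p.takeUntil v hv = Walk.cons h Walk.nil := congrArg Subtype.val h2
    conv_lhs => rw [← Walk.take_spec p hv, h3]
    simp
  · right
    have hq' : (Walk.cons h.symm p).IsPath := hp.cons hv
    have h2 : (⟨q, hq⟩ : F.Path v r) = ⟨Walk.cons h.symm p, hq'⟩ :=
      isAcyclic_iff_path_unique.mp hF _ _
    have h3 : q = Walk.cons h.symm p := congrArg Subtype.val h2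
    rw [h3]
    simp

private lemma forest_inj {V : Type*} (F : SimpleGraph V) (hF : F.IsAcyclic) :
    ∃ φ : F.edgeSet → V, Function.Injective φ ∧ ∀ e : F.edgeSet, φ e ∈ (e : Sym2 V) := by
  classical
  set root : V → V := fun v => (F.connectedComponentMk v).out with hroot_def
  have hreach : ∀ v, F.Reachable v (root v) := by
    intro v
    have : F.connectedComponentMk ((F.connectedComponentMk v).out)
        = F.connectedComponentMk v := Quot.out_eq _
    exact (SimpleGraph.ConnectedComponent.eq.mp this).symm
  set pth : ∀ v : V, F.Path v (root v) := fun v => ((hreach v).some).toPath with hpth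
  set nxt : V → V := fun v => (pth v).1.getVert 1 with hnxt_def
  have hkey : ∀ {u v : V}, F.Adj u v → nxt u = v ∨ nxt v = u := by
    intro u v h
    have hvr : root u = root v :=
      congrArg Quot.out (ConnectedComponent.connectedComponentMk_eq_of_adj h)
    have := key' hF h (pth u).1 ((pth v).1.copy rfl hvr.symm) (pth u).2
      (by simp [(pth v).2])
    rcases this with h1 | h1
    · exact Or.inl h1
    · right; rw [getVert_copy'] at h1; exact h1
  have hgood : ∀ (e : Sym2 V), e ∈ F.edgeSet → ∃ x y, e = s(x, y) ∧ nxt x = y := by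
    intro e
    induction e using Sym2.ind with
    | _ u v =>
      intro he
      have h : F.Adj u v := he
      rcases hkey h with h1 | h1
      · exact ⟨u, v, rfl, h1⟩
      · exact ⟨v, u, Sym2.eq_swap, h1⟩
  have hg := fun (e : F.edgeSet) => hgood e.1 e.2
  choose x y hxy hnx using hg
  refine ⟨x, ?_, ?_⟩
  · intro e e' hee
    have hy : y e = y e' := by rw [← hnx e, ← hnx e', hee]
    exact Subtype.ext (by rw [hxy e, hxy e', hee, hy])
  · intro e
    rw [show (e : Sym2 V) = s(x e, y e) from hxy e]
    exact Sym2.mem_mk_left _ _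

private lemma adj_or_eq_of_mem_edge {V : Type*} {G : SimpleGraph V} {s : Sym2 V}
    (hs : s ∈ G.edgeSet) {a c : V} (ha : a ∈ s) (hc : c ∈ s) : a = c ∨ G.Adj a c := by
  induction s using Sym2.ind with
  | _ u v =>
    have h : G.Adj u v := hs
    rw [Sym2.mem_iff] at ha hc
    rcases ha with rfl | rfl <;> rcases hc with rfl | rfl
    · exact Or.inl rfl
    · exact Or.inr h
    · exact Or.inr h.symm
    · exact Or.inl rfl

theorem edgeBW_le_of_forest_partition {V : Type*} [Fintype V] (G : SimpleGraph V)
    (t : ℕ) (F : Fin t → SimpleGraph V)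
    (hac : ∀ i, (F i).IsAcyclic)
    (hsup : (⨆ i, F i) = G)
    (hdisj : Pairwise (Function.onFun Disjoint (fun i => (F i).edgeSet))) :
    edgeBW G ≤ 2 * t * bw G + t - 1 := by
  classical
  rcases Nat.eq_zero_or_pos t with rfl | ht
  · -- t = 0 : G has no edges
    have hGbot : G = ⊥ := by rw [← hsup]; exact iSup_of_empty _
    have h0 : (0 : ℕ) ∈ {k : ℕ | ∃ f : G.edgeSet → ℤ, Function.Injective f ∧
        ∀ e e' : G.edgeSet, e ≠ e' → (∃ v, v ∈ (e : Sym2 V) ∧ v ∈ (e' : Sym2 V)) →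
          ((f e - f e').natAbs ≤ 0)} := by
      refine ⟨fun _ => 0, ?_, ?_⟩
      · intro e
        exact absurd e.2 (by simp [hGbot])
      · intro e
        exact absurd e.2 (by simp [hGbot])
    exact le_trans (Nat.sInf_le h0) (Nat.zero_le _)
  -- bandwidth witness
  have hne : {k : ℕ | ∃ g : V → ℤ, Function.Injective g ∧
      ∀ u v, G.Adj u v → (g u - g v).natAbs ≤ k}.Nonempty := by
    refine ⟨Finset.univ.sup (fun p : V × V =>
        ((((Fintype.equivFin V) p.1 : ℕ) : ℤ) - (((Fintype.equivFin V) p.2 : ℕ) : ℤ)).natAbs),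
      fun v => (((Fintype.equivFin V) v : ℕ) : ℤ), ?_, ?_⟩
    · intro a b hab
      have h' : (((Fintype.equivFin V) a : ℕ) : ℤ) = (((Fintype.equivFin V) b : ℕ) : ℤ) := hab
      exact (Fintype.equivFin V).injective (Fin.ext (by exact_mod_cast h'))
    · intro u v _
      simpa using Finset.le_sup (f := fun p : V × V =>
        ((((Fintype.equivFin V) p.1 : ℕ) : ℤ) - (((Fintype.equivFin V) p.2 : ℕ) : ℤ)).natAbs)
        (Finset.mem_univ (u, v))
  have hb : bw G ∈ {k : ℕ | ∃ g : V → ℤ, Function.Injective g ∧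
      ∀ u v, G.Adj u v → (g u - g v).natAbs ≤ k} := Nat.sInf_mem hne
  obtain ⟨g, hg, hgb⟩ := hb
  set b := bw G with hbdef
  -- forest injections
  have hforest := fun i => forest_inj (F i) (hac i)
  choose φ hφinj hφmem using hforest
  -- each edge belongs to some forest
  have hmemF : ∀ e ∈ G.edgeSet, ∃ i, e ∈ (F i).edgeSet := by
    intro e
    induction e using Sym2.ind with
    | _ u v =>
      intro he
      have h : G.Adj u v := he
      rw [← hsup] at h
      obtain ⟨i, hi⟩ := iSup_adj.mp h
      exact ⟨i, hi⟩
  choose idx hidx using fun (e : G.edgeSet) => hmemF e.1 e.2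
  set x : G.edgeSet → V := fun e => φ (idx e) ⟨e.1, hidx e⟩ with hxdef
  have hxmem : ∀ e : G.edgeSet, x e ∈ (e : Sym2 V) := fun e => hφmem (idx e) ⟨e.1, hidx e⟩
  have congrφ : ∀ (i j : Fin t) (hij : i = j) (s : Sym2 V) (hs : s ∈ (F i).edgeSet)
      (hs' : s ∈ (F j).edgeSet), φ i ⟨s, hs⟩ = φ j ⟨s, hs'⟩ := by
    rintro i j rfl s hs hs'; rfl
  -- the edge labeling
  have hK : (2 * t * b + t - 1) ∈ {k : ℕ | ∃ f : G.edgeSet → ℤ, Function.Injective f ∧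
      ∀ e e' : G.edgeSet, e ≠ e' → (∃ v, v ∈ (e : Sym2 V) ∧ v ∈ (e' : Sym2 V)) →
        ((f e - f e').natAbs ≤ (2 * t * b + t - 1))} := by
    refine ⟨fun e => (t : ℤ) * g (x e) + ((idx e : ℕ) : ℤ), ?_, ?_⟩
    · -- injective
      intro e e' heq
      simp only at heq
      have hmod : (((idx e : ℕ) : ℤ)) % t = (((idx e' : ℕ) : ℤ)) % t := by
        have := congrArg (fun z => z % (t : ℤ)) heq
        simpa [add_comm, Int.add_mul_emod_self_left] using this
      have hlt : (idx e : ℕ) < t := (idx e).isLt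
      have hlt' : (idx e' : ℕ) < t := (idx e').isLt
      have hival : (idx e : ℕ) = (idx e' : ℕ) := by
        have e1 : (((idx e : ℕ)) : ℤ) % t = ((idx e : ℕ) : ℤ) :=
          Int.emod_eq_of_lt (by positivity) (by exact_mod_cast hlt)
        have e2 : (((idx e' : ℕ)) : ℤ) % t = ((idx e' : ℕ) : ℤ) :=
          Int.emod_eq_of_lt (by positivity) (by exact_mod_cast hlt')
        rw [e1, e2] at hmod
        exact_mod_cast hmod
      have hieq : idx e = idx e' := Fin.ext hival
      have hgeq : g (x e) = g (x e') := by
        have ht' : (t : ℤ) ≠ 0 := by exact_mod_cast ht.ne'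
        have : (t : ℤ) * g (x e) = (t : ℤ) * g (x e') := by
          rw [hival] at heq; linarith [heq]
        exact mul_left_cancel₀ ht' this
      have hxeq : x e = x e' := hg hgeq
      have : φ (idx e') ⟨e.1, hieq ▸ hidx e⟩ = φ (idx e') ⟨e'.1, hidx e'⟩ := by
        rw [← congrφ (idx e) (idx e') hieq e.1 (hidx e) (hieq ▸ hidx e)]
        exact hxeq
      have h5 := hφinj (idx e') this
      have hval : (⟨e.1, hieq ▸ hidx e⟩ : (F (idx e')).edgeSet).1
          = (⟨e'.1, hidx e'⟩ : (F (idx e')).edgeSet).1 := by rw [h5]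
      exact Subtype.ext hval
    · -- incident bound
      intro e e' _ hshare
      obtain ⟨w, hw, hw'⟩ := hshare
      have hbound : ∀ d : G.edgeSet, w ∈ (d : Sym2 V) → (g (x d) - g w).natAbs ≤ b := by
        intro d hwd
        rcases adj_or_eq_of_mem_edge d.2 (hxmem d) hwd with h | h
        · simp [h]
        · exact hgb _ _ h
      have h1 := hbound e hw
      have h2 := hbound e' hw'
      have hdiff : ((t : ℤ) * g (x e) + ((idx e : ℕ) : ℤ)
          - ((t : ℤ) * g (x e') + ((idx e' : ℕ) : ℤ)))
          = (t : ℤ) * (g (x e) - g (x e')) + (((idx e : ℕ) : ℤ) - ((idx e' : ℕ) : ℤ)) := by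
        ring
      simp only
      rw [hdiff]
      have hA : ((t : ℤ) * (g (x e) - g (x e'))).natAbs ≤ t * (2 * b) := by
        rw [Int.natAbs_mul]
        have : (g (x e) - g (x e')).natAbs ≤ 2 * b := by
          have := Int.natAbs_add_le (g (x e) - g w) (g w - g (x e'))
          have h2' : (g w - g (x e')).natAbs = (g (x e') - g w).natAbs := by
            rw [← Int.natAbs_neg]; ring_nf
          have heq' : g (x e) - g (x e') = (g (x e) - g w) + (g w - g (x e')) := by ring
          rw [heq']
          omega
        calc (t : ℤ).natAbs * (g (x e) - g (x e')).natAbs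
            = t * (g (x e) - g (x e')).natAbs := by simp
          _ ≤ t * (2 * b) := Nat.mul_le_mul_left t this
      have hB : ((((idx e : ℕ) : ℤ)) - (((idx e' : ℕ) : ℤ))).natAbs ≤ t - 1 := by
        have hlt : (idx e : ℕ) < t := (idx e).isLt
        have hlt' : (idx e' : ℕ) < t := (idx e').isLt
        omega
      have htri := Int.natAbs_add_le ((t : ℤ) * (g (x e) - g (x e')))
        ((((idx e : ℕ) : ℤ)) - (((idx e' : ℕ) : ℤ)))
      have hfin : t * (2 * b) = 2 * t * b := by ring
      omega
  exact Nat.sInf_le hK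
end

section
/- If H is obtained from a finite graph G by subdividing one edge (replacing edge uv by a path u, w, v through a new vertex w), then B'(H) \le B'(G) + 1. -/
open SimpleGraph

theorem edgeBW_subdivide_le {V : Type*} [Fintype V] (G : SimpleGraph V) (u v : V)
    (huv : G.Adj u v) (H : SimpleGraph (Option V))
    (hH : H = SimpleGraph.fromEdgeSet
      ((Sym2.map Option.some '' (G.edgeSet \ {s(u, v)})) ∪
        {s(Option.some u, Option.none), s(Option.none, Option.some v)})) :
    edgeBW H ≤ edgeBW G + 1 := by
  classical
  haveI : Fintype G.edgeSet := Fintype.ofFinite _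
  have hne : {k : ℕ | ∃ f : G.edgeSet → ℤ, Function.Injective f ∧
      ∀ e e' : G.edgeSet, e ≠ e' → (∃ w, w ∈ (e : Sym2 V) ∧ w ∈ (e' : Sym2 V)) →
        ((f e - f e').natAbs ≤ k)}.Nonempty := by
    refine ⟨Fintype.card G.edgeSet, fun e => ((Fintype.equivFin G.edgeSet e : ℕ) : ℤ), ?_, ?_⟩
    · intro a b hab
      dsimp only at hab
      apply (Fintype.equivFin G.edgeSet).injective
      apply Fin.ext
      exact_mod_cast hab
    · intro e e' _ _
      have h1 := (Fintype.equivFin G.edgeSet e).isLt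
      have h2 := (Fintype.equivFin G.edgeSet e').isLt
      dsimp only
      omega
  have hk : edgeBW G ∈ {k : ℕ | ∃ f : G.edgeSet → ℤ, Function.Injective f ∧
      ∀ e e' : G.edgeSet, e ≠ e' → (∃ w, w ∈ (e : Sym2 V) ∧ w ∈ (e' : Sym2 V)) →
        ((f e - f e').natAbs ≤ k)} := Nat.sInf_mem hne
  obtain ⟨f, hfinj, hfb⟩ := hk
  set k := edgeBW G with hkdef
  have huvmem : s(u, v) ∈ G.edgeSet := G.mem_edgeSet.2 huv
  set euv : G.edgeSet := ⟨s(u, v), huvmem⟩ with heuv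
  set c : ℤ := f euv with hc
  set sh : ℤ → ℤ := fun t => if t < c then t else t + 1 with hsh
  set F : Sym2 V → ℤ := fun s => if h : s ∈ G.edgeSet then f ⟨s, h⟩ else 0 with hF
  set g : H.edgeSet → ℤ := fun x =>
    if (x : Sym2 (Option V)) = s(Option.some u, Option.none) then c
    else if (x : Sym2 (Option V)) = s(Option.none, Option.some v) then c + 1
    else sh (F (Sym2.map (fun o => o.getD u) (x : Sym2 (Option V)))) with hg
  -- shift lemmas
  have hsh_inj : Function.Injective sh := by
    intro s t h
    simp only [hsh] at h
    split_ifs at h <;> omega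
  have hsh_ne_c : ∀ s : ℤ, s ≠ c → sh s ≠ c := by
    intro s hs
    simp only [hsh]
    split_ifs <;> omega
  have hsh_ne_c1 : ∀ s : ℤ, s ≠ c → sh s ≠ c + 1 := by
    intro s hs
    simp only [hsh]
    split_ifs <;> omega
  have hb1 : ∀ s : ℤ, (sh s - c).natAbs ≤ (s - c).natAbs + 1 := by
    intro s
    simp only [hsh]
    split_ifs <;> omega
  have hb2 : ∀ s : ℤ, (sh s - (c + 1)).natAbs ≤ (s - c).natAbs + 1 := by
    intro s
    simp only [hsh]
    split_ifs <;> omega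
  have hb3 : ∀ s t : ℤ, (sh s - sh t).natAbs ≤ (s - t).natAbs + 1 := by
    intro s t
    simp only [hsh]
    split_ifs <;> omega
  -- the two new edges are distinct
  have hne12 : s(Option.some u, Option.none) ≠ s(Option.none, Option.some v) := by
    simp [Sym2.eq_iff, huv.ne]
  -- decomposition of H's edges
  have hdec : ∀ x : H.edgeSet, (x : Sym2 (Option V)) = s(Option.some u, Option.none) ∨
      (x : Sym2 (Option V)) = s(Option.none, Option.some v) ∨
      ∃ e : G.edgeSet, (e : Sym2 V) ≠ s(u, v) ∧
        (x : Sym2 (Option V)) = Sym2.map Option.some (e : Sym2 V) := by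
    rintro ⟨x, hx⟩
    rw [hH, SimpleGraph.edgeSet_fromEdgeSet] at hx
    obtain ⟨hx, -⟩ := hx
    rcases hx with ⟨e, ⟨he, hne'⟩, rfl⟩ | hx
    · exact Or.inr (Or.inr ⟨⟨e, he⟩, hne', rfl⟩)
    · rcases hx with h | h
      · exact Or.inl h
      · exact Or.inr (Or.inl h)
  have hnone : ∀ e : G.edgeSet, Option.none ∉ Sym2.map Option.some (e : Sym2 V) := by
    intro e hmem
    rw [Sym2.mem_map] at hmem
    obtain ⟨a, -, ha⟩ := hmem
    exact Option.some_ne_none a ha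
  -- values of g on the three kinds of edges
  have hge1 : ∀ x : H.edgeSet, (x : Sym2 (Option V)) = s(Option.some u, Option.none) →
      g x = c := by
    intro x hx
    simp [hg, hx]
  have hge2 : ∀ x : H.edgeSet, (x : Sym2 (Option V)) = s(Option.none, Option.some v) →
      g x = c + 1 := by
    intro x hx
    simp [hg, hx, hne12.symm]
  have hg_old : ∀ (e : G.edgeSet) (x : H.edgeSet),
      (x : Sym2 (Option V)) = Sym2.map Option.some (e : Sym2 V) → g x = sh (f e) := by
    intro e x hx
    have h1 : (x : Sym2 (Option V)) ≠ s(Option.some u, Option.none) := by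
      intro h
      apply hnone e
      rw [← hx, h]
      simp
    have h2 : (x : Sym2 (Option V)) ≠ s(Option.none, Option.some v) := by
      intro h
      apply hnone e
      rw [← hx, h]
      simp
    have h3 : Sym2.map (fun o => Option.getD o u) (x : Sym2 (Option V)) = (e : Sym2 V) := by
      rw [hx, Sym2.map_map]
      have hco : ((fun o => Option.getD o u) ∘ Option.some) = id := by
        funext a; rfl
      rw [hco, Sym2.map_id, id]
    simp only [hg, h1, h2, if_false, h3, hF]
    simp only [e.2, dif_pos]
  -- old edges have a label different from c
  have hfc : ∀ e : G.edgeSet, (e : Sym2 V) ≠ s(u, v) → f e ≠ c := by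
    intro e he h
    apply he
    have heq : e = euv := hfinj (by rw [h, hc])
    rw [heq]
  -- shared vertex extraction
  have hshare1 : ∀ (e : G.edgeSet) (w : Option V), w ∈ s(Option.some u, Option.none) →
      w ∈ Sym2.map Option.some (e : Sym2 V) → u ∈ (e : Sym2 V) := by
    intro e w hw1 hw2
    rw [Sym2.mem_map] at hw2
    obtain ⟨a, ha, rfl⟩ := hw2
    rw [Sym2.mem_iff] at hw1
    rcases hw1 with h | h
    · rw [Option.some_inj] at h
      rwa [← h]
    · exact absurd h (Option.some_ne_none a)
  have hshare2 : ∀ (e : G.edgeSet) (w : Option V), w ∈ s(Option.none, Option.some v) →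
      w ∈ Sym2.map Option.some (e : Sym2 V) → v ∈ (e : Sym2 V) := by
    intro e w hw1 hw2
    rw [Sym2.mem_map] at hw2
    obtain ⟨a, ha, rfl⟩ := hw2
    rw [Sym2.mem_iff] at hw1
    rcases hw1 with h | h
    · exact absurd h (Option.some_ne_none a)
    · rw [Option.some_inj] at h
      rwa [← h]
  -- incidence with the subdivided edge gives the bandwidth bound
  have hold1 : ∀ e : G.edgeSet, (e : Sym2 V) ≠ s(u, v) → u ∈ (e : Sym2 V) →
      (f e - c).natAbs ≤ k := by
    intro e he hu
    have hne' : e ≠ euv := fun h => he (by rw [h])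
    exact hfb e euv hne' ⟨u, hu, by rw [heuv]; exact Sym2.mem_mk_left u v⟩
  have hold2 : ∀ e : G.edgeSet, (e : Sym2 V) ≠ s(u, v) → v ∈ (e : Sym2 V) →
      (f e - c).natAbs ≤ k := by
    intro e he hv
    have hne' : e ≠ euv := fun h => he (by rw [h])
    exact hfb e euv hne' ⟨v, hv, by rw [heuv]; exact Sym2.mem_mk_right u v⟩
  apply Nat.sInf_le
  refine ⟨g, ?_, ?_⟩
  · -- injectivity
    intro x y hxy
    rcases hdec x with hx | hx | ⟨e, he, hx⟩ <;> rcases hdec y with hy | hy | ⟨e', he', hy⟩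
    · exact Subtype.ext (hx.trans hy.symm)
    · rw [hge1 x hx, hge2 y hy] at hxy; omega
    · exact absurd (hxy.symm.trans (hge1 x hx)) (by rw [hg_old e' y hy]; exact hsh_ne_c _ (hfc e' he'))
    · rw [hge2 x hx, hge1 y hy] at hxy; omega
    · exact Subtype.ext (hx.trans hy.symm)
    · exact absurd (hxy.symm.trans (hge2 x hx)) (by rw [hg_old e' y hy]; exact hsh_ne_c1 _ (hfc e' he'))
    · exact absurd (hxy.trans (hge1 y hy)) (by rw [hg_old e x hx]; exact hsh_ne_c _ (hfc e he))
    · exact absurd (hxy.trans (hge2 y hy)) (by rw [hg_old e x hx]; exact hsh_ne_c1 _ (hfc e he))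
    · rw [hg_old e x hx, hg_old e' y hy] at hxy
      have : e = e' := hfinj (hsh_inj hxy)
      exact Subtype.ext (hx.trans (by rw [this, ← hy]))
  · -- incidence bound
    rintro x y hxyne ⟨w, hwx, hwy⟩
    rcases hdec x with hx | hx | ⟨e, he, hx⟩ <;> rcases hdec y with hy | hy | ⟨e', he', hy⟩
    · exact absurd (Subtype.ext (hx.trans hy.symm)) hxyne
    · rw [hge1 x hx, hge2 y hy]; omega
    · rw [hge1 x hx, hg_old e' y hy]
      have hu : u ∈ (e' : Sym2 V) := hshare1 e' w (hx ▸ hwx) (hy ▸ hwy)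
      have := hold1 e' he' hu
      have := hb1 (f e')
      omega
    · rw [hge2 x hx, hge1 y hy]; omega
    · exact absurd (Subtype.ext (hx.trans hy.symm)) hxyne
    · rw [hge2 x hx, hg_old e' y hy]
      have hv : v ∈ (e' : Sym2 V) := hshare2 e' w (hx ▸ hwx) (hy ▸ hwy)
      have := hold2 e' he' hv
      have := hb2 (f e')
      omega
    · rw [hg_old e x hx, hge1 y hy]
      have hu : u ∈ (e : Sym2 V) := hshare1 e w (hy ▸ hwy) (hx ▸ hwx)
      have := hold1 e he hu
      have := hb1 (f e)
      omega
    · rw [hg_old e x hx, hge2 y hy]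
      have hv : v ∈ (e : Sym2 V) := hshare2 e w (hy ▸ hwy) (hx ▸ hwx)
      have := hold2 e he hv
      have := hb2 (f e)
      omega
    · rw [hg_old e x hx, hg_old e' y hy]
      have hee' : e ≠ e' := by
        intro h
        exact hxyne (Subtype.ext (hx.trans (by rw [h, ← hy])))
      have hw : ∃ a, a ∈ (e : Sym2 V) ∧ a ∈ (e' : Sym2 V) := by
        have h1 := hx ▸ hwx
        have h2 := hy ▸ hwy
        rw [Sym2.mem_map] at h1 h2
        obtain ⟨a, ha, rfl⟩ := h1
        obtain ⟨b, hb, hba⟩ := h2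
        rw [Option.some_inj] at hba
        exact ⟨a, ha, hba ▸ hb⟩
      have := hfb e e' hee' hw
      have := hb3 (f e) (f e')
      omega
end

section
/- If H is obtained from a finite graph G by subdividing one edge, then B'(G) \le \lfloor 3 B'(H) / 2 \rfloor; equivalently, B'(H) \ge \lceil (2 B'(G) + \delta)/3 \rceil where \delta = 1 if B'(H) is odd and \delta = 0 if B'(H) is even. -/
open SimpleGraph

/-!
Take an optimal labeling of the subdivision, with `k = B'(H)`; its two half-edges carry labels
`a ≠ b` with `|a - b| ≤ k`. Give `uv` a label `t` with `min a b ≤ t < max a b`, within `⌊k/2⌋`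
of `min a b` and `⌊k/2⌋ + 1` of `max a b`, and free it by deleting `a` and `b` from the label set
and closing both gaps by shifting down. An edge incident to `uv` in `G` was within `k` of `a` or
of `b`, so its label ends up within `k + ⌊k/2⌋` of `t`. A difference between two old labels grows
only when it straddles the freed slot `t`, and then by one; that needs `t > min a b`, i.e.
`⌊k/2⌋ ≥ 1`.
-/

theorem Int.exists_free_slot_relabeling {k : ℕ} {a b : ℤ} (hab : a ≠ b)
    (hk : (a - b).natAbs ≤ k) :
    ∃ (t : ℤ) (ψ : ℤ → ℤ),
      (∀ x ∉ ({a, b} : Set ℤ), ψ x ≠ t) ∧ Set.InjOn ψ {a, b}ᶜ ∧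
      (∀ x ∉ ({a, b} : Set ℤ), ∀ y ∉ ({a, b} : Set ℤ), (x - y).natAbs ≤ k →
        (ψ x - ψ y).natAbs ≤ k + k / 2) ∧
      (∀ x ∉ ({a, b} : Set ℤ), ((x - a).natAbs ≤ k ∨ (x - b).natAbs ≤ k) →
        (ψ x - t).natAbs ≤ k + k / 2) := by
  obtain ⟨t, ht⟩ : ∃ t, t = max (min a b) (max a b - (k / 2 : ℕ) - 1) := ⟨_, rfl⟩
  -- `ψ` closes the gap at `min a b` by shifting `(min a b, t]` down, which frees `t`, and
  -- closes the gap at `max a b` by shifting everything above it down.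
  refine ⟨t, fun x => if (min a b < x ∧ x ≤ t) ∨ max a b < x then x - 1 else x,
    ?_, fun x hx y hy => ?_, ?_, ?_⟩ <;> intros <;>
    simp only [Set.mem_compl_iff, Set.mem_insert_iff, Set.mem_singleton_iff, not_or] at * <;>
    split_ifs at * <;> omega

lemma Sym2.mem_map_of_mem {α β : Type*} {f : α → β} {a : α} {z : Sym2 α} (h : a ∈ z) :
    f a ∈ z.map f :=
  Sym2.mem_map.2 ⟨a, h, rfl⟩

namespace SimpleGraph

variable {V : Type*}

def subdivide (G : SimpleGraph V) (u v : V) : SimpleGraph (Option V) :=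
  fromEdgeSet ((Sym2.map Option.some '' (G.edgeSet \ {s(u, v)})) ∪
    {s(Option.some u, Option.none), s(Option.none, Option.some v)})

section Subdivide

variable {G : SimpleGraph V} {u v : V}

lemma map_some_mem_edgeSet_subdivide {e : Sym2 V} (he : e ∈ G.edgeSet) (huv : e ≠ s(u, v)) :
    e.map some ∈ (G.subdivide u v).edgeSet := by
  rw [subdivide, edgeSet_fromEdgeSet]
  refine ⟨Or.inl ⟨e, ⟨he, huv⟩, rfl⟩, ?_⟩
  simpa [Sym2.isDiag_map (Option.some_injective V)] using G.not_isDiag_of_mem_edgeSet he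

lemma some_none_mem_edgeSet_subdivide : s(some u, none) ∈ (G.subdivide u v).edgeSet := by
  simp [subdivide]

lemma none_some_mem_edgeSet_subdivide : s(none, some v) ∈ (G.subdivide u v).edgeSet := by
  simp [subdivide]

end Subdivide

lemma map_some_ne_of_none_mem {e : Sym2 V} {z : Sym2 (Option V)} (hz : none ∈ z) :
    e.map some ≠ z := by
  rintro rfl
  simp [Sym2.mem_map] at hz

def IsEdgeBandwidthLabeling (G : SimpleGraph V) (f : Sym2 V → ℤ) (k : ℕ) : Prop :=
  Set.InjOn f G.edgeSet ∧
    ∀ e ∈ G.edgeSet, ∀ e' ∈ G.edgeSet, e ≠ e' → (∃ w, w ∈ e ∧ w ∈ e') →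
      (f e - f e').natAbs ≤ k

section EdgeBW

variable [Fintype V] {G : SimpleGraph V}

lemma edgeBW_le_of_isEdgeBandwidthLabeling {f : Sym2 V → ℤ} {k : ℕ}
    (hf : G.IsEdgeBandwidthLabeling f k) : edgeBW G ≤ k :=
  Nat.sInf_le ⟨f ∘ Subtype.val, hf.1.injective,
    fun e e' hne hinc => hf.2 _ e.2 _ e'.2 (Subtype.coe_ne_coe.2 hne) hinc⟩

lemma exists_isEdgeBandwidthLabeling_edgeBW (G : SimpleGraph V) :
    ∃ f, G.IsEdgeBandwidthLabeling f (edgeBW G) := by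
  classical
  obtain ⟨f, hf_inj, hf⟩ : edgeBW G ∈ {k : ℕ | ∃ f : G.edgeSet → ℤ, Function.Injective f ∧
      ∀ e e' : G.edgeSet, e ≠ e' → (∃ w, w ∈ (e : Sym2 V) ∧ w ∈ (e' : Sym2 V)) →
        (f e - f e').natAbs ≤ k} := by
    refine Nat.sInf_mem ?_
    obtain ⟨n, ⟨σ⟩⟩ := Finite.exists_equiv_fin G.edgeSet
    refine ⟨n, fun e => ((σ e : ℕ) : ℤ),
      (Nat.cast_injective.comp Fin.val_injective).comp σ.injective, fun e e' _ _ => ?_⟩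
    have := (σ e).isLt
    have := (σ e').isLt
    dsimp only
    omega
  refine ⟨fun e => if h : e ∈ G.edgeSet then f ⟨e, h⟩ else 0, fun e he e' he' h => ?_,
    fun e he e' he' hne hinc => ?_⟩
  · exact congrArg Subtype.val (hf_inj (by simpa [he, he'] using h))
  · simpa [he, he'] using hf ⟨e, he⟩ ⟨e', he'⟩ (by simpa using hne) hinc

end EdgeBW

namespace IsEdgeBandwidthLabeling

variable {G : SimpleGraph V} {u v : V} {F : Sym2 (Option V) → ℤ} {k : ℕ} {e : Sym2 V}

lemma map_some_notMem_halves (hF : (G.subdivide u v).IsEdgeBandwidthLabeling F k)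
    (he : e ∈ G.edgeSet) (huv : e ≠ s(u, v)) :
    F (e.map some) ∉ ({F s(some u, none), F s(none, some v)} : Set ℤ) := by
  simp only [Set.mem_insert_iff, Set.mem_singleton_iff, not_or]
  exact ⟨hF.1.ne (map_some_mem_edgeSet_subdivide he huv) some_none_mem_edgeSet_subdivide
      (map_some_ne_of_none_mem (by simp)),
    hF.1.ne (map_some_mem_edgeSet_subdivide he huv) none_some_mem_edgeSet_subdivide
      (map_some_ne_of_none_mem (by simp))⟩

lemma near_halves (hF : (G.subdivide u v).IsEdgeBandwidthLabeling F k)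
    (he : e ∈ G.edgeSet) (huv : e ≠ s(u, v)) (hinc : ∃ w, w ∈ e ∧ w ∈ s(u, v)) :
    (F (e.map some) - F s(some u, none)).natAbs ≤ k ∨
      (F (e.map some) - F s(none, some v)).natAbs ≤ k := by
  obtain ⟨w, hwe, hw⟩ := hinc
  rcases Sym2.mem_iff.1 hw with rfl | rfl
  · exact .inl (hF.2 _ (map_some_mem_edgeSet_subdivide he huv) _ some_none_mem_edgeSet_subdivide
      (map_some_ne_of_none_mem (by simp)) ⟨some w, Sym2.mem_map_of_mem hwe, by simp⟩)
  · exact .inr (hF.2 _ (map_some_mem_edgeSet_subdivide he huv) _ none_some_mem_edgeSet_subdivide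
      (map_some_ne_of_none_mem (by simp)) ⟨some w, Sym2.mem_map_of_mem hwe, by simp⟩)

end IsEdgeBandwidthLabeling

theorem exists_isEdgeBandwidthLabeling_of_subdivide {G : SimpleGraph V} {u v : V} (huv : u ≠ v)
    {F : Sym2 (Option V) → ℤ} {k : ℕ} (hF : (G.subdivide u v).IsEdgeBandwidthLabeling F k) :
    ∃ f, G.IsEdgeBandwidthLabeling f (k + k / 2) := by
  classical
  have h₁ : s(some u, none) ∈ (G.subdivide u v).edgeSet := some_none_mem_edgeSet_subdivide
  have h₂ : s(none, some v) ∈ (G.subdivide u v).edgeSet := none_some_mem_edgeSet_subdivide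
  have h₁₂ : s(some u, none) ≠ s(none, some v) := by simp [huv]
  obtain ⟨t, ψ, hψt, hψ_inj, hψ_near, hψt_near⟩ := Int.exists_free_slot_relabeling
    (hF.1.ne h₁ h₂ h₁₂) (hF.2 _ h₁ _ h₂ h₁₂ ⟨none, by simp, by simp⟩)
  refine ⟨fun e => if e = s(u, v) then t else ψ (F (e.map some)), fun e he e' he' h => ?_,
    fun e he e' he' hee' hinc => ?_⟩
  · by_cases huv : e = s(u, v) <;> by_cases huv' : e' = s(u, v) <;>
      simp only [huv, huv', ↓reduceIte] at h
    · exact huv.trans huv'.symm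
    · exact absurd h.symm (hψt _ (hF.map_some_notMem_halves he' huv'))
    · exact absurd h (hψt _ (hF.map_some_notMem_halves he huv))
    · refine Sym2.map.injective (Option.some_injective V) (hF.1
        (map_some_mem_edgeSet_subdivide he huv) (map_some_mem_edgeSet_subdivide he' huv') ?_)
      exact hψ_inj (hF.map_some_notMem_halves he huv) (hF.map_some_notMem_halves he' huv') h
  · by_cases huv : e = s(u, v) <;> by_cases huv' : e' = s(u, v) <;>
      simp only [huv, huv', ↓reduceIte]
    · exact absurd (huv.trans huv'.symm) hee'
    · obtain ⟨w, hwe, hwe'⟩ := hinc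
      have := hψt_near _ (hF.map_some_notMem_halves he' huv')
        (hF.near_halves he' huv' ⟨w, hwe', huv ▸ hwe⟩)
      omega
    · exact hψt_near _ (hF.map_some_notMem_halves he huv) (hF.near_halves he huv (huv' ▸ hinc))
    · obtain ⟨w, hwe, hwe'⟩ := hinc
      refine hψ_near _ (hF.map_some_notMem_halves he huv) _ (hF.map_some_notMem_halves he' huv')
        (hF.2 _ (map_some_mem_edgeSet_subdivide he huv) _ (map_some_mem_edgeSet_subdivide he' huv')
          ((Sym2.map.injective (Option.some_injective V)).ne hee')
          ⟨some w, Sym2.mem_map_of_mem hwe, Sym2.mem_map_of_mem hwe'⟩)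

end SimpleGraph

theorem edgeBW_le_subdivide {V : Type*} [Fintype V] (G : SimpleGraph V) (u v : V)
    (huv : G.Adj u v) (H : SimpleGraph (Option V))
    (hH : H = SimpleGraph.fromEdgeSet
      ((Sym2.map Option.some '' (G.edgeSet \ {s(u, v)})) ∪
        {s(Option.some u, Option.none), s(Option.none, Option.some v)})) :
    edgeBW G ≤ 3 * edgeBW H / 2 := by
  obtain ⟨F, hF⟩ := exists_isEdgeBandwidthLabeling_edgeBW (G.subdivide u v)
  obtain ⟨f, hf⟩ := exists_isEdgeBandwidthLabeling_of_subdivide huv.ne hF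
  have hG : edgeBW G ≤ edgeBW H + edgeBW H / 2 := hH ▸ edgeBW_le_of_isEdgeBandwidthLabeling hf
  omega
end

section
/- If the multigraph H is obtained from a finite graph G by contracting one edge (keeping all other edges, including any resulting loops and multiple edges), then B'(G) - 1 \le B'(H) \le 2 B'(G) - 1. -/
open SimpleGraph

/-- The edge-bandwidth of the multigraph obtained from `G` by contracting the
edge `s(u,v)` (keeping all other edges, including resulting loops and multiple
edges): its edges are the edges of `G` other than `s(u,v)`, and two such edges
are incident iff they share a vertex of `G` or each of them meets `{u, v}`
(whose two vertices get merged). -/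
noncomputable def contractEdgeBW {V : Type*} [Fintype V] (G : SimpleGraph V)
    (u v : V) : ℕ :=
  sInf {k : ℕ | ∃ f : {e : G.edgeSet // (e : Sym2 V) ≠ s(u, v)} → ℤ,
    Function.Injective f ∧
    ∀ e e' : {e : G.edgeSet // (e : Sym2 V) ≠ s(u, v)}, e ≠ e' →
      ((∃ x, x ∈ (e.1 : Sym2 V) ∧ x ∈ (e'.1 : Sym2 V)) ∨
        ((u ∈ (e.1 : Sym2 V) ∨ v ∈ (e.1 : Sym2 V)) ∧
          (u ∈ (e'.1 : Sym2 V) ∨ v ∈ (e'.1 : Sym2 V)))) →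
      (f e - f e').natAbs ≤ k}

private lemma exists_bound {X : Type*} [Finite X] :
    ∃ (k : ℕ) (f : X → ℤ), Function.Injective f ∧
      ∀ a b : X, (f a - f b).natAbs ≤ k := by
  obtain ⟨n, ⟨e⟩⟩ := Finite.exists_equiv_fin X
  have hinj : Function.Injective (fun x : X => ((e x : ℕ) : ℤ)) :=
    fun a b h => e.injective (Fin.val_injective (Nat.cast_injective h))
  refine ⟨n, _, hinj, fun a b => ?_⟩
  show ((((e a : ℕ)) : ℤ) - ((e b : ℕ) : ℤ)).natAbs ≤ n
  have h1 : (e a : ℕ) < n := (e a).isLt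
  have h2 : (e b : ℕ) < n := (e b).isLt
  omega

/-- The edge type of the contracted multigraph. -/
private def CE {V : Type*} [Fintype V] (G : SimpleGraph V) (u v : V) :=
  {e : G.edgeSet // (e : Sym2 V) ≠ s(u, v)}

open Classical in
/-- Insert a label `c` for the edge `s(u,v)`, shifting labels `≥ c` up by one. -/
private noncomputable def insertLabel {V : Type*} [Fintype V] (G : SimpleGraph V)
    (u v : V) (g : CE G u v → ℤ) (c : ℤ) : G.edgeSet → ℤ :=
  fun x => if hx : (x : Sym2 V) = s(u, v) then c
    else if c ≤ g ⟨x, hx⟩ then g ⟨x, hx⟩ + 1 else g ⟨x, hx⟩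

private lemma insertLabel_pos {V : Type*} [Fintype V] (G : SimpleGraph V)
    (u v : V) (g : CE G u v → ℤ) (c : ℤ) (x : G.edgeSet)
    (hx : (x : Sym2 V) = s(u, v)) : insertLabel G u v g c x = c := by
  unfold insertLabel; exact dif_pos hx

private lemma insertLabel_neg {V : Type*} [Fintype V] (G : SimpleGraph V)
    (u v : V) (g : CE G u v → ℤ) (c : ℤ) (x : G.edgeSet)
    (hx : (x : Sym2 V) ≠ s(u, v)) :
    insertLabel G u v g c x
      = if c ≤ g ⟨x, hx⟩ then g ⟨x, hx⟩ + 1 else g ⟨x, hx⟩ := by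
  unfold insertLabel; exact dif_neg hx

/-- Delete the label `t` (of the contracted edge), compressing labels `> t` down. -/
private noncomputable def compress {V : Type*} [Fintype V] (G : SimpleGraph V)
    (u v : V) (f : G.edgeSet → ℤ) (t : ℤ) : CE G u v → ℤ :=
  fun e => if t < f e.1 then f e.1 - 1 else f e.1

theorem edgeBW_contract {V : Type*} [Fintype V] (G : SimpleGraph V) (u v : V)
    (huv : G.Adj u v) :
    edgeBW G - 1 ≤ contractEdgeBW G u v ∧
      contractEdgeBW G u v ≤ 2 * edgeBW G - 1 := by
  classical
  haveI : Finite G.edgeSet := Subtype.finite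
  haveI : Finite (CE G u v) := Subtype.finite
  have hE0 : s(u, v) ∈ G.edgeSet := G.mem_edgeSet.mpr huv
  -- nonemptiness of the two defining sets
  have hSGne : Set.Nonempty {k : ℕ | ∃ f : G.edgeSet → ℤ, Function.Injective f ∧
      ∀ e e' : G.edgeSet, e ≠ e' → (∃ x, x ∈ (e : Sym2 V) ∧ x ∈ (e' : Sym2 V)) →
        ((f e - f e').natAbs ≤ k)} := by
    obtain ⟨k, f, hinj, hb⟩ := exists_bound (X := G.edgeSet)
    exact ⟨k, f, hinj, fun e e' _ _ => hb e e'⟩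
  have hSHne : Set.Nonempty {k : ℕ |
      ∃ f : {e : G.edgeSet // (e : Sym2 V) ≠ s(u, v)} → ℤ,
      Function.Injective f ∧
      ∀ e e' : {e : G.edgeSet // (e : Sym2 V) ≠ s(u, v)}, e ≠ e' →
        ((∃ x, x ∈ (e.1 : Sym2 V) ∧ x ∈ (e'.1 : Sym2 V)) ∨
          ((u ∈ (e.1 : Sym2 V) ∨ v ∈ (e.1 : Sym2 V)) ∧
            (u ∈ (e'.1 : Sym2 V) ∨ v ∈ (e'.1 : Sym2 V)))) →
        (f e - f e').natAbs ≤ k} := by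
    obtain ⟨k, f, hinj, hb⟩ := exists_bound (X := CE G u v)
    exact ⟨k, f, hinj, fun e e' _ _ => hb e e'⟩
  -- optimal labelings
  have hB : ∃ f : G.edgeSet → ℤ, Function.Injective f ∧
      ∀ e e' : G.edgeSet, e ≠ e' → (∃ x, x ∈ (e : Sym2 V) ∧ x ∈ (e' : Sym2 V)) →
        ((f e - f e').natAbs ≤ edgeBW G) := Nat.sInf_mem hSGne
  have hK : ∃ g : CE G u v → ℤ, Function.Injective g ∧
      ∀ e e' : CE G u v, e ≠ e' →
        ((∃ x, x ∈ (e.1 : Sym2 V) ∧ x ∈ (e'.1 : Sym2 V)) ∨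
          ((u ∈ (e.1 : Sym2 V) ∨ v ∈ (e.1 : Sym2 V)) ∧
            (u ∈ (e'.1 : Sym2 V) ∨ v ∈ (e'.1 : Sym2 V)))) →
        (g e - g e').natAbs ≤ contractEdgeBW G u v := Nat.sInf_mem hSHne
  obtain ⟨f, hfinj, hf⟩ := hB
  obtain ⟨g, hginj, hg⟩ := hK
  constructor
  · -- lower bound : edgeBW G - 1 ≤ contractEdgeBW G u v
    have key : edgeBW G ≤ contractEdgeBW G u v + 1 := by
      -- a level `c` close to all edges meeting {u,v}
      obtain ⟨c, hc⟩ : ∃ c : ℤ, ∀ e : CE G u v,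
          (u ∈ (e.1 : Sym2 V) ∨ v ∈ (e.1 : Sym2 V)) →
          (g e - c).natAbs ≤ contractEdgeBW G u v := by
        by_cases hS : ∃ e : CE G u v, u ∈ (e.1 : Sym2 V) ∨ v ∈ (e.1 : Sym2 V)
        · obtain ⟨e₀, he₀⟩ := hS
          refine ⟨g e₀, fun e he => ?_⟩
          by_cases hee : e = e₀
          · subst hee; simp
          · exact hg e e₀ hee (Or.inr ⟨he, he₀⟩)
        · exact ⟨0, fun e he => absurd ⟨e, he⟩ hS⟩
      set F := insertLabel G u v g c with hF
      have hFinj : Function.Injective F := by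
        intro a b hab
        by_cases ha : (a : Sym2 V) = s(u, v) <;>
          by_cases hb : (b : Sym2 V) = s(u, v)
        · exact Subtype.ext (ha.trans hb.symm)
        · exfalso
          rw [hF, insertLabel_pos G u v g c a ha,
            insertLabel_neg G u v g c b hb] at hab
          split_ifs at hab <;> omega
        · exfalso
          rw [hF, insertLabel_neg G u v g c a ha,
            insertLabel_pos G u v g c b hb] at hab
          split_ifs at hab <;> omega
        · rw [hF, insertLabel_neg G u v g c a ha,
            insertLabel_neg G u v g c b hb] at hab
          have : g ⟨a, ha⟩ = g ⟨b, hb⟩ := by split_ifs at hab <;> omega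
          exact congrArg Subtype.val (hginj this)
      have hFb : ∀ e e' : G.edgeSet, e ≠ e' →
          (∃ x, x ∈ (e : Sym2 V) ∧ x ∈ (e' : Sym2 V)) →
          ((F e - F e').natAbs ≤ contractEdgeBW G u v + 1) := by
        rintro e e' hne ⟨x, hx1, hx2⟩
        by_cases he : (e : Sym2 V) = s(u, v) <;>
          by_cases he' : (e' : Sym2 V) = s(u, v)
        · exact absurd (Subtype.ext (he.trans he'.symm)) hne
        · rw [hF, insertLabel_pos G u v g c e he,
            insertLabel_neg G u v g c e' he']
          have hmem : u ∈ (e' : Sym2 V) ∨ v ∈ (e' : Sym2 V) := by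
            rw [he] at hx1
            rcases Sym2.mem_iff.mp hx1 with rfl | rfl
            · exact Or.inl hx2
            · exact Or.inr hx2
          have := hc ⟨e', he'⟩ hmem
          split_ifs <;> omega
        · rw [hF, insertLabel_neg G u v g c e he,
            insertLabel_pos G u v g c e' he']
          have hmem : u ∈ (e : Sym2 V) ∨ v ∈ (e : Sym2 V) := by
            rw [he'] at hx2
            rcases Sym2.mem_iff.mp hx2 with rfl | rfl
            · exact Or.inl hx1
            · exact Or.inr hx1
          have := hc ⟨e, he⟩ hmem
          split_ifs <;> omega
        · rw [hF, insertLabel_neg G u v g c e he,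
            insertLabel_neg G u v g c e' he']
          have hD : (⟨e, he⟩ : CE G u v) ≠ ⟨e', he'⟩ :=
            fun h => hne (congrArg Subtype.val h)
          have := hg ⟨e, he⟩ ⟨e', he'⟩ hD (Or.inl ⟨x, hx1, hx2⟩)
          split_ifs <;> omega
      have hmem : contractEdgeBW G u v + 1 ∈ {k : ℕ |
          ∃ f : G.edgeSet → ℤ, Function.Injective f ∧
          ∀ e e' : G.edgeSet, e ≠ e' →
            (∃ x, x ∈ (e : Sym2 V) ∧ x ∈ (e' : Sym2 V)) →
            ((f e - f e').natAbs ≤ k)} := ⟨F, hFinj, hFb⟩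
      exact Nat.sInf_le hmem
    omega
  · -- upper bound : contractEdgeBW G u v ≤ 2 * edgeBW G - 1
    set E0 : G.edgeSet := ⟨s(u, v), hE0⟩ with hE0def
    have hne_t : ∀ e : CE G u v, f e.1 ≠ f E0 := by
      intro e h
      exact e.2 (congrArg Subtype.val (hfinj h))
    set gc := compress G u v f (f E0) with hgc
    have hgcinj : Function.Injective gc := by
      intro a b h
      rw [hgc] at h
      simp only [compress] at h
      have ha := hne_t a
      have hb := hne_t b
      have : f a.1 = f b.1 := by split_ifs at h <;> omega
      exact Subtype.ext (hfinj this)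
    have hgcb : ∀ e e' : CE G u v, e ≠ e' →
        ((∃ x, x ∈ (e.1 : Sym2 V) ∧ x ∈ (e'.1 : Sym2 V)) ∨
          ((u ∈ (e.1 : Sym2 V) ∨ v ∈ (e.1 : Sym2 V)) ∧
            (u ∈ (e'.1 : Sym2 V) ∨ v ∈ (e'.1 : Sym2 V)))) →
        (gc e - gc e').natAbs ≤ 2 * edgeBW G - 1 := by
      intro e e' hne hinc
      have hne1 : e.1 ≠ e'.1 := fun h => hne (Subtype.ext h)
      have hfne : f e.1 ≠ f e'.1 := fun h => hne1 (hfinj h)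
      have hte := hne_t e
      have hte' := hne_t e'
      rw [hgc]
      simp only [compress]
      rcases hinc with ⟨x, hx1, hx2⟩ | ⟨h1, h2⟩
      · have hb := hf e.1 e'.1 hne1 ⟨x, hx1, hx2⟩
        split_ifs <;> omega
      · have hne0 : e.1 ≠ E0 := fun h => e.2 (congrArg Subtype.val h)
        have hne0' : e'.1 ≠ E0 := fun h => e'.2 (congrArg Subtype.val h)
        have hbe : (f e.1 - f E0).natAbs ≤ edgeBW G := by
          refine hf e.1 E0 hne0 ?_
          rcases h1 with h | h
          · exact ⟨u, h, by simp [hE0def]⟩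
          · exact ⟨v, h, by simp [hE0def]⟩
        have hbe' : (f e'.1 - f E0).natAbs ≤ edgeBW G := by
          refine hf e'.1 E0 hne0' ?_
          rcases h2 with h | h
          · exact ⟨u, h, by simp [hE0def]⟩
          · exact ⟨v, h, by simp [hE0def]⟩
        split_ifs <;> omega
    have hmem : 2 * edgeBW G - 1 ∈ {k : ℕ |
        ∃ f : {e : G.edgeSet // (e : Sym2 V) ≠ s(u, v)} → ℤ,
        Function.Injective f ∧
        ∀ e e' : {e : G.edgeSet // (e : Sym2 V) ≠ s(u, v)}, e ≠ e' →
          ((∃ x, x ∈ (e.1 : Sym2 V) ∧ x ∈ (e'.1 : Sym2 V)) ∨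
            ((u ∈ (e.1 : Sym2 V) ∨ v ∈ (e.1 : Sym2 V)) ∧
              (u ∈ (e'.1 : Sym2 V) ∨ v ∈ (e'.1 : Sym2 V)))) →
          (f e - f e').natAbs ≤ k} := ⟨gc, hgcinj, hgcb⟩
    exact Nat.sInf_le hmem
end

section
/- For every n \ge 2, the edge-bandwidth of the complete graph K_n equals \lfloor n^2/4 \rfloor + \lceil n/2 \rceil - 2. -/
/-!
If incident edges get labels at most `k` apart, all labels at a vertex `v` lie in a window
`[a v, a v + k]`. Write `n = r + s + 1` and pick a threshold `t` such that at most `r` vertices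
have `a v < t` and at most `s` have `a v > t`. An edge labelled below `t` has both ends among the
former, an edge labelled above `t + k` has both ends among the latter, and at most `k + 1` edges
have labels in `[t, t + k]`. Hence `C(n, 2) ≤ C(r, 2) + (k + 1) + C(s, 2)`, that is
`r * s + r + s ≤ k + 1`, which for `r = ⌊(n - 1) / 2⌋`, `s = ⌊n / 2⌋` is the claimed bound.

Conversely, listing the edges `{i < j}` with `i + j < 2 r` first, in colexicographic order, and
the remaining ones after them in lexicographic order puts the edges at every vertex within
`r * s + r + s - 1` positions of each other.
-/

open SimpleGraph

open Finset Function

section Windows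

variable {V : Type*} {G : SimpleGraph V}

def LabelsInWindows (f : G.edgeSet → ℤ) (a : V → ℤ) (k : ℕ) : Prop :=
  ∀ v (e : G.edgeSet), v ∈ (e : Sym2 V) → a v ≤ f e ∧ f e ≤ a v + k

lemma LabelsInWindows.natAbs_sub_le {f : G.edgeSet → ℤ} {a : V → ℤ} {k : ℕ}
    (h : LabelsInWindows f a k) {e e' : G.edgeSet}
    (hee' : ∃ v, v ∈ (e : Sym2 V) ∧ v ∈ (e' : Sym2 V)) : (f e - f e').natAbs ≤ k := by
  obtain ⟨v, hv, hv'⟩ := hee'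
  have := h v e hv
  have := h v e' hv'
  omega

lemma exists_labelsInWindows [Fintype V] {f : G.edgeSet → ℤ} {k : ℕ}
    (hf : ∀ e e' : G.edgeSet, e ≠ e' → (∃ v, v ∈ (e : Sym2 V) ∧ v ∈ (e' : Sym2 V)) →
      (f e - f e').natAbs ≤ k) :
    ∃ a, LabelsInWindows f a k := by
  classical
  suffices ∀ v, ∃ c : ℤ, ∀ e : G.edgeSet, v ∈ (e : Sym2 V) → c ≤ f e ∧ f e ≤ c + k by
    choose a ha using this
    exact ⟨a, ha⟩
  intro v
  by_cases hv : Nonempty {e : G.edgeSet // v ∈ (e : Sym2 V)}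
  · obtain ⟨⟨e₀, he₀⟩, hmin⟩ := Finite.exists_min fun e : {e : G.edgeSet // v ∈ (e : Sym2 V)} ↦ f e
    refine ⟨f e₀, fun e he ↦ ⟨hmin ⟨e, he⟩, ?_⟩⟩
    obtain rfl | hne := eq_or_ne e e₀
    · omega
    · have := hf e e₀ hne ⟨v, he, he₀⟩
      omega
  · exact ⟨0, fun e he ↦ (hv ⟨⟨e, he⟩⟩).elim⟩

lemma edgeBW_le_of_labelsInWindows [Fintype V] {f : G.edgeSet → ℤ} {a : V → ℤ} {k : ℕ}
    (hf : Injective f) (h : LabelsInWindows f a k) : edgeBW G ≤ k :=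
  Nat.sInf_le ⟨f, hf, fun _ _ _ ↦ h.natAbs_sub_le⟩

lemma le_edgeBW_of_forall_labelsInWindows [Fintype V] {m : ℕ}
    (h : ∀ (f : G.edgeSet → ℤ) (a : V → ℤ) (k : ℕ), Injective f → LabelsInWindows f a k → m ≤ k) :
    m ≤ edgeBW G := by
  classical
  -- numbering the edges shows that the set defining `edgeBW G` is nonempty
  let f : G.edgeSet → ℤ := fun e ↦ Fintype.equivFin G.edgeSet e
  have hf : Injective f := fun e e' h ↦ by simpa [f, Fin.val_inj] using h
  have hwin : LabelsInWindows f 0 (Fintype.card G.edgeSet) := fun _ e _ ↦ by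
    have := (Fintype.equivFin G.edgeSet e).isLt
    simp only [f, Pi.zero_apply]
    omega
  refine le_csInf ⟨_, f, hf, fun _ _ _ ↦ hwin.natAbs_sub_le⟩ ?_
  rintro k ⟨f, hf, hk⟩
  obtain ⟨a, ha⟩ := exists_labelsInWindows hk
  exact h f a k hf ha

lemma card_le_choose_two_of_forall_mem {E : Finset G.edgeSet} {A : Finset V}
    (h : ∀ e ∈ E, ∀ v ∈ (e : Sym2 V), v ∈ A) : #E ≤ (#A).choose 2 := by
  classical
  rw [← Sym2.card_image_offDiag]
  refine card_le_card_of_injOn Subtype.val (fun e he ↦ ?_) Subtype.val_injective.injOn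
  obtain ⟨⟨x, y⟩, hxy⟩ := e
  simp only [mem_coe, mem_image, mem_offDiag, Prod.exists]
  exact ⟨x, y, ⟨h _ he x (Sym2.mem_mk_left x y), h _ he y (Sym2.mem_mk_right x y), hxy.ne⟩, rfl⟩

lemma card_edgeSet_le_of_labelsInWindows [Fintype V] [Fintype G.edgeSet] {f : G.edgeSet → ℤ}
    {a : V → ℤ} {k : ℕ} (hf : Injective f) (ha : LabelsInWindows f a k) (t : ℤ) :
    Fintype.card G.edgeSet ≤ (#{v | a v < t}).choose 2 + (k + 1) + (#{v | t < a v}).choose 2 := by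
  classical
  have low : #{e | f e < t} ≤ (#{v | a v < t}).choose 2 :=
    card_le_choose_two_of_forall_mem fun e he v hv ↦ by
      have := ha v e hv
      simp only [mem_filter, mem_univ, true_and] at he ⊢
      omega
  have high : #{e | t + k < f e} ≤ (#{v | t < a v}).choose 2 :=
    card_le_choose_two_of_forall_mem fun e he v hv ↦ by
      have := ha v e hv
      simp only [mem_filter, mem_univ, true_and] at he ⊢
      omega
  have middle : #({e | f e ∈ Icc t (t + k)} : Finset G.edgeSet) ≤ k + 1 :=
    calc _ ≤ #(Icc t (t + k)) :=
          card_le_card_of_injOn f (fun e he ↦ (mem_filter.mp he).2) hf.injOn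
      _ = k + 1 := by rw [Int.card_Icc]; omega
  calc Fintype.card G.edgeSet
      ≤ #(({e | f e < t} : Finset G.edgeSet) ∪ ({e | f e ∈ Icc t (t + k)} : Finset G.edgeSet) ∪
          ({e | t + k < f e} : Finset G.edgeSet)) :=
        card_le_card fun e _ ↦ by
          simp only [mem_union, mem_filter, mem_univ, true_and, mem_Icc]
          omega
    _ ≤ #{e | f e < t} + #{e | f e ∈ Icc t (t + k)} + #{e | t + k < f e} :=
        (card_union_le _ _).trans (Nat.add_le_add_right (card_union_le _ _) _)
    _ ≤ _ := by omega

end Windows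

lemma exists_card_lt_le_and_card_gt_le {α : Type*} [LinearOrder α] {n : ℕ} (a : Fin n → α)
    (r : Fin n) : ∃ t, #{v | a v < t} ≤ r ∧ #{v | t < a v} ≤ n - 1 - r := by
  set σ := Tuple.sort a
  have hσ : Monotone (a ∘ σ) := Tuple.monotone_sort a
  refine ⟨a (σ r), ?_, ?_⟩
  · rw [← Fin.card_Iio r]
    refine card_le_card_of_injOn σ.symm (fun v hv ↦ ?_) σ.symm.injective.injOn
    exact mem_coe.2 (mem_Iio.2 (hσ.reflect_lt (by simpa using hv)))
  · rw [← Fin.card_Ioi r]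
    refine card_le_card_of_injOn σ.symm (fun v hv ↦ ?_) σ.symm.injective.injOn
    exact mem_coe.2 (mem_Ioi.2 (hσ.reflect_lt (by simpa using hv)))

lemma Nat.add_choose_two (a b : ℕ) : (a + b).choose 2 = a.choose 2 + a * b + b.choose 2 := by
  induction b with
  | zero => simp
  | succ b ih =>
    rw [← add_assoc, Nat.choose_succ_succ', Nat.choose_one_right, ih, Nat.choose_succ_succ',
      Nat.choose_one_right]
    ring

lemma mul_add_add_le_of_labelsInWindows {r s k : ℕ}
    {f : (completeGraph (Fin (r + s + 1))).edgeSet → ℤ} {a : Fin (r + s + 1) → ℤ}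
    (hf : Injective f) (ha : LabelsInWindows f a k) : r * s + r + s ≤ k + 1 := by
  classical
  obtain ⟨t, hlow, hhigh⟩ := exists_card_lt_le_and_card_gt_le a ⟨r, by omega⟩
  have hcount := card_edgeSet_le_of_labelsInWindows hf ha t
  have hcard : Fintype.card (completeGraph (Fin (r + s + 1))).edgeSet = (r + s + 1).choose 2 := by
    rw [← edgeFinset_card]
    convert card_edgeFinset_top_eq_card_choose_two (V := Fin (r + s + 1))
    simp
  have hsplit : (r + s + 1).choose 2 = r.choose 2 + (r * s + r + s) + s.choose 2 := by
    rw [add_assoc, Nat.add_choose_two r (s + 1), Nat.choose_succ_succ', Nat.choose_one_right]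
    ring
  have hlow' := Nat.choose_le_choose 2 hlow
  have hhigh' := Nat.choose_le_choose 2 (hhigh.trans_eq (by simp) : _ ≤ s)
  simp only at hlow'
  omega

namespace ColexLex

def tri (a : ℤ) : ℤ := a * (a - 1) / 2

lemma two_mul_tri (a : ℤ) : 2 * tri a = a * (a - 1) := by
  have : 2 ∣ a * (a - 1) := by
    rcases Int.even_or_odd a with h | h
    · exact (even_iff_two_dvd.mp h).mul_right _
    · exact (even_iff_two_dvd.mp (h.sub_odd odd_one)).mul_left _
  unfold tri
  omega

lemma tri_succ (a : ℤ) : tri (a + 1) = tri a + a := by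
  have h1 := two_mul_tri (a + 1)
  have h2 := two_mul_tri a
  nlinarith

lemma tri_add (a b : ℤ) : tri (a + b) = tri a + tri b + a * b := by
  have h1 := two_mul_tri (a + b)
  have h2 := two_mul_tri a
  have h3 := two_mul_tri b
  nlinarith

lemma tri_nonneg (a : ℤ) : 0 ≤ tri a := by
  have h := two_mul_tri a
  rcases le_or_gt a 0 with ha | ha <;> nlinarith

lemma le_tri_add_one (a : ℤ) : a ≤ tri a + 1 := by
  have h := two_mul_tri a
  nlinarith [sq_nonneg (2 * a - 3)]

lemma monotoneOn_tri : MonotoneOn tri (Set.Ici 0) := by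
  intro a ha b _ hab
  have h1 := two_mul_tri a
  have h2 := two_mul_tri b
  have ha : (0 : ℤ) ≤ a := ha
  rcases hab.eq_or_lt with rfl | hab
  · rfl
  · nlinarith

lemma eq_and_eq_of_add_eq_add_of_lt_sub {g : ℤ → ℤ} (hg : MonotoneOn g (Set.Ici 0)) {m m' x x' : ℤ}
    (hm : 0 ≤ m) (hx : 0 ≤ x) (hxm : x < g (m + 1) - g m)
    (hm' : 0 ≤ m') (hx' : 0 ≤ x') (hxm' : x' < g (m' + 1) - g m')
    (h : g m + x = g m' + x') : m = m' ∧ x = x' := by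
  rcases lt_trichotomy m m' with hlt | rfl | hgt
  · have := hg (show 0 ≤ m + 1 by omega) hm' (show m + 1 ≤ m' by omega)
    omega
  · omega
  · have := hg (show 0 ≤ m' + 1 by omega) hm (show m' + 1 ≤ m by omega)
    omega

lemma tri_add_inj {i j i' j' : ℤ} (hi : 0 ≤ i) (hij : i < j) (hi' : 0 ≤ i') (hij' : i' < j')
    (h : tri j + i = tri j' + i') : j = j' ∧ i = i' :=
  eq_and_eq_of_add_eq_add_of_lt_sub monotoneOn_tri (by omega) hi (by rw [tri_succ]; omega)
    (by omega) hi' (by rw [tri_succ]; omega) h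

section Label

variable {R S i j : ℤ}

/-- The position of the edge `{i, j}`, `0 ≤ i < j ≤ R + S`, in the list of edges of `K_{R+S+1}` that
starts with the edges having `i + j < 2 R` in colexicographic order and continues with the others in
lexicographic order. The second and fourth branches count back from the end of their block. -/
def label (R S i j : ℤ) : ℤ :=
  if j ≤ R then tri j + i
  else if i + j < 2 * R then tri R + tri (R + 1) - 1 - (tri (2 * R - j) + (2 * R - 1 - j - i))
  else if i < R then tri R + tri (R + 1) + (i * (S - R + 1) + tri i + (i + j - 2 * R))
  else tri (R + S + 1) - 1 - (tri (R + S - i) + (R + S - j))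

/-- For `0 < v < 2 R` this is `label R S 0 v`, the smallest label at `v`. -/
def windowStart (R v : ℤ) : ℤ :=
  if v ≤ R then tri v else tri R + tri (R + 1) - tri (2 * R + 1 - v)

def window (R S v : ℤ) : Set ℤ := Set.Icc (windowStart R v) (windowStart R v + (R * S + R + S - 1))

lemma windowStart_of_ge {v : ℤ} (hv : R ≤ v) :
    windowStart R v = tri R + tri (R + 1) - tri (2 * R + 1 - v) := by
  rcases hv.eq_or_lt with rfl | hv
  · simp [windowStart, show 2 * R + 1 - R = R + 1 by ring]
  · exact if_neg (not_le.mpr hv)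

lemma mem_window_of_le (hR : 0 ≤ R) (hRS : R ≤ S) (hi : 0 ≤ i) (hij : i < j) (hj : j ≤ R) :
    label R S i j ∈ window R S i ∩ window R S j := by
  rw [label, if_pos hj, window, window, windowStart, windowStart, if_pos (by omega),
    if_pos hj]
  have := monotoneOn_tri hi (show 0 ≤ j by omega) hij.le
  have := monotoneOn_tri (show 0 ≤ j by omega) hR hj
  have := le_tri_add_one i
  have := tri_nonneg i
  have := two_mul_tri R
  refine ⟨⟨by omega, ?_⟩, ⟨by omega, ?_⟩⟩ <;> nlinarith

lemma mem_window_of_add_lt (hR : 0 ≤ R) (hRS : R ≤ S) (hi : 0 ≤ i) (hRj : R < j)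
    (hsum : i + j < 2 * R) :
    label R S i j ∈ window R S i ∩ window R S j := by
  rw [label, if_neg (not_le.mpr hRj), if_pos hsum, window, window, windowStart,
    if_pos (by omega), windowStart_of_ge hRj.le]
  have := tri_succ (2 * R - j)
  rw [show 2 * R - j + 1 = 2 * R + 1 - j by ring] at this
  have := tri_succ (i + 1)
  have := tri_succ i
  have := monotoneOn_tri (show 0 ≤ i + 1 + 1 by omega) (show 0 ≤ 2 * R + 1 - j by omega)
    (show i + 1 + 1 ≤ 2 * R + 1 - j by omega)
  have := monotoneOn_tri hi hR (show i ≤ R by omega)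
  have := monotoneOn_tri (show 0 ≤ 2 * R + 1 - j by omega) hR (show 2 * R + 1 - j ≤ R by omega)
  have := tri_succ R
  have := tri_nonneg i
  have := tri_nonneg (2 * R + 1 - j)
  have := two_mul_tri R
  have := mul_le_mul_of_nonneg_left hRS hR
  refine ⟨⟨by omega, ?_⟩, ⟨by omega, ?_⟩⟩ <;> nlinarith

lemma mem_window_of_lt (hRS : R ≤ S) (hSR : S ≤ R + 1) (hi : 0 ≤ i) (hj : j ≤ R + S)
    (hRj : R < j) (hsum : 2 * R ≤ i + j) (hiR : i < R) :
    label R S i j ∈ window R S i ∩ window R S j := by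
  rw [label, if_neg (not_le.mpr hRj), if_neg (not_lt.mpr hsum), if_pos hiR, window,
    window, windowStart, if_pos hiR.le, windowStart_of_ge hRj.le]
  have := monotoneOn_tri (show 0 ≤ 2 * R + 1 - j by omega) (show 0 ≤ i + 1 by omega)
    (show 2 * R + 1 - j ≤ i + 1 by omega)
  have := tri_succ i
  have := tri_succ R
  have := tri_nonneg i
  have := tri_nonneg R
  have := tri_nonneg (2 * R + 1 - j)
  have := mul_nonneg hi (show 0 ≤ S - R + 1 by omega)
  have := mul_nonneg (show 0 ≤ R - 1 - i by omega) (show 0 ≤ S - R + 1 by omega)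
  have := mul_nonneg (show 0 ≤ R - 1 - i by omega) hi
  have := two_mul_tri R
  have := two_mul_tri i
  refine ⟨⟨by omega, ?_⟩, ⟨by omega, ?_⟩⟩ <;> nlinarith

lemma mem_window_of_ge (hR : 0 ≤ R) (hRS : R ≤ S) (hSR : S ≤ R + 1) (hij : i < j)
    (hj : j ≤ R + S) (hRi : R ≤ i) :
    label R S i j ∈ window R S i ∩ window R S j := by
  rw [label, if_neg (by omega), if_neg (by omega), if_neg (by omega), window, window,
    windowStart_of_ge hRi, windowStart_of_ge (by omega)]
  have : tri (R + S + 1) = tri R + tri S + R * S + R + S := by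
    rw [add_assoc, tri_add, tri_succ]; ring
  have := monotoneOn_tri (show 0 ≤ R + S - j by omega) (show 0 ≤ R + S - i by omega)
    (show R + S - j ≤ R + S - i by omega)
  have := monotoneOn_tri (show 0 ≤ R + S - i by omega) (show 0 ≤ S by omega)
    (show R + S - i ≤ S by omega)
  have := mul_nonneg hR (show 0 ≤ S by omega)
  have := two_mul_tri S
  have := tri_nonneg (R + S - j)
  rcases (show S = R ∨ S = R + 1 by omega) with rfl | rfl
  · have := tri_succ S
    have hi' : tri (2 * S + 1 - i) = tri (S + S - i) + (S + S - i) := by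
      rw [show 2 * S + 1 - i = S + S - i + 1 by ring, tri_succ]
    have hj' : tri (2 * S + 1 - j) = tri (S + S - j) + (S + S - j) := by
      rw [show 2 * S + 1 - j = S + S - j + 1 by ring, tri_succ]
    rw [hi', hj']
    refine ⟨⟨by nlinarith, by nlinarith⟩, ⟨by nlinarith, by nlinarith⟩⟩
  · rw [show 2 * R + 1 - i = R + (R + 1) - i by ring, show 2 * R + 1 - j = R + (R + 1) - j by ring]
    refine ⟨⟨by nlinarith, by nlinarith⟩, ⟨by nlinarith, by nlinarith⟩⟩

lemma label_cases (hR : 0 ≤ R) (hRS : R ≤ S) (hi : 0 ≤ i) (hij : i < j)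
    (hj : j ≤ R + S) :
    (j ≤ R ∧ label R S i j = tri j + i ∧
        label R S i j < tri (R + 1)) ∨
      (R < j ∧ i + j < 2 * R ∧
        label R S i j = tri R + tri (R + 1) - 1 - (tri (2 * R - j) + (2 * R - 1 - j - i)) ∧
        tri (R + 1) ≤ label R S i j ∧ label R S i j < tri R + tri (R + 1)) ∨
      (R < j ∧ 2 * R ≤ i + j ∧ i < R ∧
        label R S i j = tri R + tri (R + 1) + (i * (S - R + 1) + tri i + (i + j - 2 * R)) ∧
        tri R + tri (R + 1) ≤ label R S i j ∧
          label R S i j < tri R + R * S + R) ∨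
      (R ≤ i ∧ label R S i j = tri (R + S + 1) - 1 - (tri (R + S - i) + (R + S - j)) ∧
        tri R + R * S + R ≤ label R S i j) := by
  by_cases h₁ : j ≤ R
  · have := tri_succ j
    have := monotoneOn_tri (show 0 ≤ j + 1 by omega) (show 0 ≤ R + 1 by omega)
      (show j + 1 ≤ R + 1 by omega)
    refine Or.inl ⟨h₁, if_pos h₁, ?_⟩
    rw [label, if_pos h₁]
    omega
  by_cases h₂ : i + j < 2 * R
  · have := tri_succ (2 * R - j)
    have := monotoneOn_tri (show 0 ≤ 2 * R - j + 1 by omega) hR (show 2 * R - j + 1 ≤ R by omega)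
    have := tri_nonneg (2 * R - j)
    refine Or.inr (Or.inl ⟨by omega, h₂, ?_, ?_, ?_⟩) <;>
      rw [label, if_neg h₁, if_pos h₂] <;> omega
  by_cases h₃ : i < R
  · have hrow := mul_le_mul_of_nonneg_right (show i + 1 ≤ R by omega) (show 0 ≤ S - R + 1 by omega)
    have := monotoneOn_tri (show 0 ≤ i + 1 by omega) hR (show i + 1 ≤ R by omega)
    have := tri_succ i
    have := tri_succ R
    have := tri_nonneg i
    have := mul_nonneg hi (show 0 ≤ S - R + 1 by omega)
    have := two_mul_tri R
    refine Or.inr (Or.inr (Or.inl ⟨by omega, by omega, h₃, ?_, ?_, ?_⟩)) <;>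
      rw [label, if_neg h₁, if_neg h₂, if_pos h₃] <;> nlinarith
  · have : tri (R + S + 1) = tri R + tri S + R * S + R + S := by
      rw [add_assoc, tri_add, tri_succ]; ring
    have := tri_succ (R + S - i)
    have := tri_succ S
    have := monotoneOn_tri (show 0 ≤ R + S - i + 1 by omega) (show 0 ≤ S + 1 by omega)
      (show R + S - i + 1 ≤ S + 1 by omega)
    refine Or.inr (Or.inr (Or.inr ⟨by omega, ?_, ?_⟩)) <;>
      rw [label, if_neg h₁, if_neg h₂, if_neg h₃]
    omega

lemma label_inj (hR : 0 ≤ R) (hRS : R ≤ S) {i' j' : ℤ}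
    (hi : 0 ≤ i) (hij : i < j) (hj : j ≤ R + S) (hi' : 0 ≤ i') (hij' : i' < j') (hj' : j' ≤ R + S)
    (h : label R S i j = label R S i' j') : i = i' ∧ j = j' := by
  have hrowStart : MonotoneOn (fun m ↦ m * (S - R + 1) + tri m) (Set.Ici 0) := fun a ha b hb hab ↦
    add_le_add (mul_le_mul_of_nonneg_right hab (by omega)) (monotoneOn_tri ha hb hab)
  have := tri_nonneg R
  have := tri_succ R
  have := mul_nonneg hR (show 0 ≤ S - R by omega)
  have := two_mul_tri R
  have : tri (R + 1) ≤ R * S + R := by nlinarith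
  rcases label_cases hR hRS hi hij hj with
      ⟨-, e, b⟩ | ⟨-, hsum, e, b, c⟩ | ⟨-, hsum, hiR, e, b, c⟩ | ⟨hRi, e, b⟩ <;>
    rcases label_cases hR hRS hi' hij' hj' with
      ⟨-, e', b'⟩ | ⟨-, hsum', e', b', c'⟩ | ⟨-, hsum', hiR', e', b', c'⟩ | ⟨hRi', e', b'⟩ <;>
    -- the four blocks occupy disjoint intervals of labels
    try (exfalso; linarith)
  all_goals rw [e, e'] at h
  · exact (tri_add_inj hi hij hi' hij' h).symm
  · have := tri_add_inj (show 0 ≤ 2 * R - 1 - j - i by omega)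
      (show 2 * R - 1 - j - i < 2 * R - j by omega) (show 0 ≤ 2 * R - 1 - j' - i' by omega)
      (show 2 * R - 1 - j' - i' < 2 * R - j' by omega) (by omega)
    omega
  · have := eq_and_eq_of_add_eq_add_of_lt_sub (m := i) (m' := i') hrowStart hi
      (show 0 ≤ i + j - 2 * R by omega) (by simp only [tri_succ]; linarith) hi'
      (show 0 ≤ i' + j' - 2 * R by omega) (by simp only [tri_succ]; linarith) (by linarith)
    omega
  · have := tri_add_inj (show 0 ≤ R + S - j by omega) (show R + S - j < R + S - i by omega)
      (show 0 ≤ R + S - j' by omega) (show R + S - j' < R + S - i' by omega) (by omega)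
    omega

lemma label_mem_window (hR : 0 ≤ R) (hRS : R ≤ S) (hSR : S ≤ R + 1) (hi : 0 ≤ i)
    (hij : i < j) (hj : j ≤ R + S) : label R S i j ∈ window R S i ∩ window R S j := by
  rcases label_cases hR hRS hi hij hj with
      ⟨hjR, -⟩ | ⟨hRj, hsum, -⟩ | ⟨hRj, hsum, hiR, -⟩ | ⟨hRi, -⟩
  · exact mem_window_of_le hR hRS hi hij hjR
  · exact mem_window_of_add_lt hR hRS hi hRj hsum
  · exact mem_window_of_lt hRS hSR hi hj hRj hsum hiR
  · exact mem_window_of_ge hR hRS hSR hij hj hRi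

end Label

end ColexLex

lemma Sym2.inf_lt_sup_of_not_isDiag {α : Type*} [LinearOrder α] {e : Sym2 α} (he : ¬e.IsDiag) :
    e.inf < e.sup := by
  induction e using Sym2.ind with
  | _ x y =>
    rw [Sym2.mk_isDiag_iff] at he
    rcases lt_or_gt_of_ne he with h | h <;> simp [h.le, h]

lemma Sym2.mem_iff_eq_inf_or_eq_sup {α : Type*} [LinearOrder α] {e : Sym2 α} {v : α} :
    v ∈ e ↔ v = e.inf ∨ v = e.sup := by
  induction e using Sym2.ind with
  | _ x y => rcases le_total x y with h | h <;> simp [h, Sym2.mem_iff, or_comm]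

lemma edgeBW_completeGraph_le_of_pairLabel {n k : ℕ} (label : ℤ → ℤ → ℤ) (start : ℤ → ℤ)
    (hinj : ∀ i j i' j' : ℤ, 0 ≤ i → i < j → j < n → 0 ≤ i' → i' < j' → j' < n →
      label i j = label i' j' → i = i' ∧ j = j')
    (hwin : ∀ i j : ℤ, 0 ≤ i → i < j → j < n →
      label i j ∈ Set.Icc (start i) (start i + k) ∩ Set.Icc (start j) (start j + k)) :
    edgeBW (completeGraph (Fin n)) ≤ k := by
  let lo (e : (completeGraph (Fin n)).edgeSet) : ℤ := ((e : Sym2 (Fin n)).inf : ℕ)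
  let hi (e : (completeGraph (Fin n)).edgeSet) : ℤ := ((e : Sym2 (Fin n)).sup : ℕ)
  have hpair (e : (completeGraph (Fin n)).edgeSet) : 0 ≤ lo e ∧ lo e < hi e ∧ hi e < n := by
    have hlt := Sym2.inf_lt_sup_of_not_isDiag (not_isDiag_of_mem_edgeSet _ e.2)
    have hsup := (e : Sym2 (Fin n)).sup.isLt
    exact ⟨by positivity, Nat.cast_lt.mpr hlt, Nat.cast_lt.mpr hsup⟩
  refine edgeBW_le_of_labelsInWindows (f := fun e ↦ label (lo e) (hi e))
    (a := fun v ↦ start (v : ℕ)) (fun e e' h ↦ ?_) (fun v e hv ↦ ?_)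
  · obtain ⟨h₀, hlt, hlt'⟩ := hpair e
    obtain ⟨h₀', hlt₂, hlt₂'⟩ := hpair e'
    obtain ⟨hlo, hhi⟩ := hinj _ _ _ _ h₀ hlt hlt' h₀' hlt₂ hlt₂' h
    exact Subtype.ext <| Sym2.inf_eq_inf_and_sup_eq_sup.mp
      ⟨Fin.ext (Nat.cast_inj.mp hlo), Fin.ext (Nat.cast_inj.mp hhi)⟩
  · obtain ⟨h₀, hlt, hlt'⟩ := hpair e
    obtain ⟨hwin_lo, hwin_hi⟩ := hwin _ _ h₀ hlt hlt'
    rcases Sym2.mem_iff_eq_inf_or_eq_sup.mp hv with rfl | rfl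
    exacts [hwin_lo, hwin_hi]

lemma edgeBW_completeGraph_add_one {r s : ℕ} (hrs : r ≤ s) (hsr : s ≤ r + 1) (hs : 1 ≤ s) :
    edgeBW (completeGraph (Fin (r + s + 1))) + 1 = r * s + r + s := by
  have hk : ((r * s + r + s - 1 : ℕ) : ℤ) = r * s + r + s - 1 := by
    push_cast [Nat.cast_sub (show 1 ≤ r * s + r + s by omega)]
    ring
  have upper : edgeBW (completeGraph (Fin (r + s + 1))) ≤ r * s + r + s - 1 := by
    refine edgeBW_completeGraph_le_of_pairLabel (ColexLex.label r s) (ColexLex.windowStart r)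
      (fun i j i' j' hi hij hj hi' hij' hj' ↦ ?_) (fun i j hi hij hj ↦ ?_)
    · push_cast at hj hj'
      exact ColexLex.label_inj (by positivity) (by exact_mod_cast hrs) hi hij (by omega)
        hi' hij' (by omega)
    · push_cast at hj
      rw [hk]
      exact ColexLex.label_mem_window (by positivity) (by exact_mod_cast hrs)
        (by exact_mod_cast hsr) hi hij (by omega)
  have lower : r * s + r + s - 1 ≤ edgeBW (completeGraph (Fin (r + s + 1))) :=
    le_edgeBW_of_forall_labelsInWindows fun _ _ _ hf ha ↦ by
      have := mul_add_add_le_of_labelsInWindows hf ha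
      omega
  omega

lemma Nat.sq_div_four_add_succ_div_two (n : ℕ) (hn : 1 ≤ n) :
    n ^ 2 / 4 + (n + 1) / 2 = (n - 1) / 2 * (n / 2) + (n - 1) / 2 + n / 2 + 1 := by
  obtain ⟨q, rfl | rfl⟩ := Nat.even_or_odd' n
  · obtain ⟨r, rfl⟩ : ∃ r, q = r + 1 := ⟨q - 1, by omega⟩
    rw [show (2 * (r + 1)) ^ 2 = 4 * (r * (r + 1) + r + 1) by ring,
      show (2 * (r + 1) - 1) / 2 = r by omega, show 2 * (r + 1) / 2 = r + 1 by omega]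
    omega
  · rw [show (2 * q + 1) ^ 2 = 4 * (q * q + q) + 1 by ring, show (2 * q + 1 - 1) / 2 = q by omega,
      show (2 * q + 1) / 2 = q by omega]
    omega

theorem edgeBW_completeGraph (n : ℕ) (hn : 2 ≤ n) :
    edgeBW (completeGraph (Fin n)) = n ^ 2 / 4 + (n + 1) / 2 - 2 := by
  have hsplit : n = (n - 1) / 2 + n / 2 + 1 := by omega
  have key := edgeBW_completeGraph_add_one (r := (n - 1) / 2) (s := n / 2) (by omega) (by omega)
    (by omega)
  rw [← hsplit] at key
  have := Nat.sq_div_four_add_succ_div_two n (by omega)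
  omega
end

section
/- For every n \ge 1, the edge-bandwidth of the complete bipartite graph K_{n,n} equals \binom{n+1}{2} - 1. -/
open SimpleGraph

/-!
The line graph of `K_{n,n}` is the rook's graph `K_n □ K_n` on the `n × n` board, whose
bandwidth we compute.

Lower bound (Harper's boundary argument): let `S` be the set of the `x` cells with the smallest
labels. The largest label on a cell outside `S` sharing a line with `S` exceeds a label in `S` by at
least `#T - #S`, where `T` is the union of the lines through `S`. If `S` meets `a` rows and `b`
columns then `ab ≥ x` and `#T = n² - (n - a)(n - b)`; for `x = C(n,2) + 1 - ⌊n²/4⌋` this forces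
`(n - a)(n - b) ≤ n²/4` and hence `#T - #S ≥ C(n+1,2) - 1`.

Upper bound: write `n = 2m + r` with `r ≤ 1`, split the rows into classes `L, M, H` of sizes
`m, r, m` and the columns into classes `A, H` of sizes `m + r, m`, and fill the blocks
`L×A, M×A, L×H, H×A, M×H, H×H` in this order, each column by column. Every row and every column
then lies in a window of `C(n+1,2)` consecutive labels.
-/

open Finset

variable {V W : Type*}

def IsBandwidthLabeling (G : SimpleGraph V) (f : V → ℤ) (k : ℕ) : Prop :=
  Function.Injective f ∧ ∀ u v, G.Adj u v → (f u - f v).natAbs ≤ k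

lemma bw_le [Fintype V] {G : SimpleGraph V} {f : V → ℤ} {k : ℕ}
    (h : IsBandwidthLabeling G f k) : bw G ≤ k :=
  Nat.sInf_le ⟨f, h⟩

lemma exists_isBandwidthLabeling_bw [Fintype V] (G : SimpleGraph V) :
    ∃ f, IsBandwidthLabeling G f (bw G) := by
  refine Nat.sInf_mem (s := {k | ∃ f, IsBandwidthLabeling G f k})
    ⟨Fintype.card V, fun v => (Fintype.equivFin V v : ℕ),
      (Nat.cast_injective.comp Fin.val_injective).comp (Fintype.equivFin V).injective,
      fun u v _ => ?_⟩
  have := (Fintype.equivFin V u).isLt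
  have := (Fintype.equivFin V v).isLt
  dsimp only
  omega

lemma IsBandwidthLabeling.comp_iso {G : SimpleGraph V} {H : SimpleGraph W} {f : W → ℤ} {k : ℕ}
    (h : IsBandwidthLabeling H f k) (e : G ≃g H) : IsBandwidthLabeling G (f ∘ e) k :=
  ⟨h.1.comp e.injective, fun _ _ huv => h.2 _ _ (e.map_adj_iff.2 huv)⟩

lemma bw_congr [Fintype V] [Fintype W] {G : SimpleGraph V} {H : SimpleGraph W} (e : G ≃g H) :
    bw G = bw H := by
  obtain ⟨f, hf⟩ := exists_isBandwidthLabeling_bw H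
  obtain ⟨g, hg⟩ := exists_isBandwidthLabeling_bw G
  exact le_antisymm (bw_le (hf.comp_iso e)) (bw_le (hg.comp_iso e.symm))

lemma edgeBW_eq_bw_lineGraph [Fintype V] (G : SimpleGraph V) [Fintype G.edgeSet] :
    edgeBW G = bw G.lineGraph := by
  simp only [edgeBW, bw, lineGraph_adj_iff_exists, and_imp]

namespace SimpleGraph

variable (α β : Type*) {α' β' : Type*}

abbrev rookGraph : SimpleGraph (α × β) := (⊤ : SimpleGraph α) □ (⊤ : SimpleGraph β)

variable {α β}

lemma rookGraph_adj {p q : α × β} :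
    (rookGraph α β).Adj p q ↔ p ≠ q ∧ (p.1 = q.1 ∨ p.2 = q.2) := by
  rcases p with ⟨a, b⟩
  rcases q with ⟨a', b'⟩
  simp only [boxProd_adj, top_adj, ne_eq, Prod.mk.injEq]
  tauto

def rookGraphCongr (e : α ≃ α') (e' : β ≃ β') : rookGraph α β ≃g rookGraph α' β' :=
  ⟨e.prodCongr e', by simp⟩

def completeBipartiteEdge (p : α × β) : (completeBipartiteGraph α β).edgeSet :=
  ⟨s(.inl p.1, .inr p.2), by simp⟩

lemma completeBipartiteEdge_bijective :
    Function.Bijective (completeBipartiteEdge (α := α) (β := β)) := by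
  refine ⟨fun p q h => ?_, fun ⟨e, he⟩ => ?_⟩
  · simpa [completeBipartiteEdge, Prod.ext_iff] using h
  · induction e using Sym2.ind with
    | _ u v =>
      rcases u with a | b <;> rcases v with a' | b' <;> simp at he
      · exact ⟨(a, b'), rfl⟩
      · exact ⟨(a', b), Subtype.ext Sym2.eq_swap⟩

noncomputable def rookGraphIsoLineGraph :
    rookGraph α β ≃g (completeBipartiteGraph α β).lineGraph where
  toEquiv := Equiv.ofBijective _ completeBipartiteEdge_bijective
  map_rel_iff' {p q} := by
    rw [lineGraph_adj_iff_exists, rookGraph_adj]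
    simp only [Equiv.ofBijective_apply, completeBipartiteEdge_bijective.1.ne_iff]
    simp [completeBipartiteEdge]

end SimpleGraph

lemma exists_downClosed_card_eq {α γ : Type*} [Fintype α] [LinearOrder γ] {f : α → γ}
    (hf : Function.Injective f) {k : ℕ} (hk : k ≤ Fintype.card α) :
    ∃ S : Finset α, #S = k ∧ ∀ p ∈ S, ∀ q, f q ≤ f p → q ∈ S := by
  classical
  induction k with
  | zero => exact ⟨∅, by simp⟩
  | succ k ih =>
    obtain ⟨S, hSk, hS⟩ := ih (by omega)
    have hne : Sᶜ.Nonempty := by rw [← card_pos, card_compl]; omega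
    obtain ⟨q₀, hq₀, hmin⟩ := Sᶜ.exists_min_image f hne
    refine ⟨insert q₀ S, by rw [card_insert_of_notMem (mem_compl.1 hq₀), hSk], ?_⟩
    intro p hp q hqp
    rcases mem_insert.1 hp with rfl | hp
    · by_cases hq : q ∈ S
      · exact mem_insert_of_mem hq
      · rw [hf (le_antisymm hqp (hmin q (mem_compl.2 hq)))]
        exact mem_insert_self _ _
    · exact mem_insert_of_mem (hS p hp q hqp)

lemma IsBandwidthLabeling.card_le_card_add {G : SimpleGraph V} {f : V → ℤ} {k : ℕ}
    (hf : IsBandwidthLabeling G f k) {S T : Finset V}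
    (hS : ∀ p ∈ S, ∀ q, f q ≤ f p → q ∈ S)
    (hT : ∀ t ∈ T, t ∉ S → ∃ s ∈ S, G.Adj t s) : #T ≤ #S + k := by
  classical
  have hsdiff := le_card_sdiff S T
  rcases (T \ S).eq_empty_or_nonempty with h | h
  · rw [h, card_empty] at hsdiff
    omega
  obtain ⟨e, he, hmax⟩ := (T \ S).exists_max_image f h
  obtain ⟨s, hs, hadj⟩ := hT e (mem_sdiff.1 he).1 (mem_sdiff.1 he).2
  have hmaps : Set.MapsTo f ((T \ S : Finset V) : Set V) (Ioc (f s) (f e)) := fun t ht =>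
    mem_Ioc.2 ⟨lt_of_not_ge fun hts => (mem_sdiff.1 ht).2 (hS s hs t hts), hmax t ht⟩
  have hcard := card_le_card_of_injOn f hmaps hf.1.injOn
  have hse := hf.2 e s hadj
  rw [Int.card_Ioc] at hcard
  omega

lemma four_mul_mul_add_two_mul_le {n a b c d : ℕ} (hac : a + c = n) (hbd : b + d = n)
    (h : n * n < 4 * (c * d)) : 4 * (a * b) + 2 * n ≤ n * n + 1 := by
  have hcd : n < c + d := by
    by_contra! hle
    nlinarith [sq_nonneg ((c : ℤ) - d)]
  nlinarith [sq_nonneg ((a : ℤ) - b)]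

lemma two_mul_choose_two_add_self (n : ℕ) : 2 * n.choose 2 + n = n * n := by
  induction n with
  | zero => rfl
  | succ n ih =>
    rw [Nat.choose_succ_succ', Nat.choose_one_right]
    nlinarith [ih]

lemma two_mul_add_add_one_choose_two {m r : ℕ} (hr : r ≤ 1) :
    (2 * m + r + 1).choose 2 = (m + r) * (2 * m + 1) := by
  have := two_mul_choose_two_add_self (2 * m + r + 1)
  obtain rfl | rfl : r = 0 ∨ r = 1 := by omega
  all_goals ring_nf at this ⊢; omega

lemma card_compl_product_compl_add {α β : Type*} [Fintype α] [Fintype β] [DecidableEq α]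
    [DecidableEq β] (A : Finset α) (B : Finset β) :
    #((Aᶜ ×ˢ Bᶜ)ᶜ) + #Aᶜ * #Bᶜ = Fintype.card α * Fintype.card β := by
  rw [← card_product, card_compl_add_card, Fintype.card_prod]

lemma exists_rookGraph_adj_of_notMem {α β : Type*} [DecidableEq α] [DecidableEq β]
    {S : Finset (α × β)} {t : α × β}
    (ht : t.1 ∈ S.image Prod.fst ∨ t.2 ∈ S.image Prod.snd) (htS : t ∉ S) :
    ∃ s ∈ S, (rookGraph α β).Adj t s := by
  simp only [mem_image] at ht
  rcases ht with ⟨s, hs, hst⟩ | ⟨s, hs, hst⟩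
  · exact ⟨s, hs, rookGraph_adj.2 ⟨fun hts => htS (hts ▸ hs), Or.inl hst.symm⟩⟩
  · exact ⟨s, hs, rookGraph_adj.2 ⟨fun hts => htS (hts ▸ hs), Or.inr hst.symm⟩⟩

theorem choose_two_sub_one_le_bw_rookGraph (ι : Type*) [Fintype ι] :
    (Fintype.card ι + 1).choose 2 - 1 ≤ bw (rookGraph ι ι) := by
  classical
  obtain ⟨n, hn⟩ : ∃ n, Fintype.card ι = n := ⟨_, rfl⟩
  rcases n.eq_zero_or_pos with rfl | hpos
  · simp [hn]
  have hchoose := two_mul_choose_two_add_self n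
  have hlin : 2 * n ≤ n * n + 1 := by nlinarith
  have hsucc : (n + 1).choose 2 = n.choose 2 + n := by
    rw [Nat.choose_succ_succ', Nat.choose_one_right, add_comm]
  obtain ⟨f, hf⟩ := exists_isBandwidthLabeling_bw (rookGraph ι ι)
  obtain ⟨S, hSx, hS⟩ := exists_downClosed_card_eq hf.1 (k := n.choose 2 + 1 - n * n / 4)
    (by rw [Fintype.card_prod, hn]; omega)
  set A := S.image Prod.fst
  set B := S.image Prod.snd
  have hSAB : #S ≤ #A * #B := card_product A B ▸ card_le_card fun p hp =>
    mem_product.2 ⟨mem_image_of_mem _ hp, mem_image_of_mem _ hp⟩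
  have hT := hf.card_le_card_add hS (T := (Aᶜ ×ˢ Bᶜ)ᶜ) fun t ht htS =>
    exists_rookGraph_adj_of_notMem
      (by simpa only [mem_compl, mem_product, not_and_or, not_not] using ht) htS
  have hTcard := card_compl_product_compl_add A B
  have hquarter : 4 * (#Aᶜ * #Bᶜ) ≤ n * n := by
    by_contra! h
    have := four_mul_mul_add_two_mul_le (hn ▸ card_add_card_compl A)
      (hn ▸ card_add_card_compl B) h
    omega
  rw [hn] at hTcard ⊢
  omega

lemma isBandwidthLabeling_rookGraph_of_windows {α β : Type*} {f : α × β → ℕ}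
    (hf : Function.Injective f) (w : ℕ)
    (hrow : ∀ a, ∃ s, ∀ b, s ≤ f (a, b) ∧ f (a, b) < s + w)
    (hcol : ∀ b, ∃ s, ∀ a, s ≤ f (a, b) ∧ f (a, b) < s + w) :
    IsBandwidthLabeling (rookGraph α β) (fun p => (f p : ℤ)) (w - 1) := by
  refine ⟨Nat.cast_injective.comp hf, fun p q hpq => ?_⟩
  obtain ⟨-, hline⟩ := rookGraph_adj.1 hpq
  obtain ⟨a, b⟩ := p
  obtain ⟨a', b'⟩ := q
  rcases hline with rfl | rfl
  · obtain ⟨s, hs⟩ := hrow a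
    have := hs b
    have := hs b'
    dsimp only
    omega
  · obtain ⟨s, hs⟩ := hcol b
    have := hs a
    have := hs a'
    dsimp only
    omega

lemma injective_blockLayout {α : Type*} (blk pos : α → ℕ) (size : ℕ → ℕ)
    (hpos : ∀ x, pos x < size (blk x))
    (hinj : ∀ x y, blk x = blk y → pos x = pos y → x = y) :
    Function.Injective fun x => ∑ l ∈ range (blk x), size l + pos x := by
  have key : ∀ x y, blk x < blk y →
      ∑ l ∈ range (blk x), size l + pos x < ∑ l ∈ range (blk y), size l := fun x y h =>
    calc ∑ l ∈ range (blk x), size l + pos x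
        < ∑ l ∈ range (blk x + 1), size l := by
          rw [sum_range_succ]; exact Nat.add_lt_add_left (hpos x) _
      _ ≤ ∑ l ∈ range (blk y), size l := sum_le_sum_of_subset (range_subset_range.2 h)
  intro x y hxy
  rcases lt_trichotomy (blk x) (blk y) with h | h | h
  · have := key x y h; simp only at hxy; omega
  · simp only [h] at hxy; exact hinj x y h (by omega)
  · have := key y x h; simp only at hxy; omega

lemma eq_and_eq_of_mul_add_eq {h a a' b b' : ℕ} (ha : a < h) (ha' : a' < h)
    (e : b * h + a = b' * h + a') : b = b' ∧ a = a' := by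
  have h0 : 0 < h := by omega
  have hd := (Nat.div_mod_unique h0).2 ⟨(by ring : a + h * b = b * h + a), ha⟩
  have hd' := (Nat.div_mod_unique h0).2 ⟨(by ring : a' + h * b' = b' * h + a'), ha'⟩
  rw [e] at hd
  exact ⟨hd.1.symm.trans hd'.1, hd.2.symm.trans hd'.2⟩

namespace RookLabeling

variable (m r : ℕ)

-- Row classes `L ⊕ M ⊕ H` and column classes `A ⊕ H`.
abbrev Row := Fin m ⊕ Fin r ⊕ Fin m
abbrev Col := Fin (m + r) ⊕ Fin m

variable {m r}

def height : Row m r → ℕ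
  | .inl _ => m
  | .inr (.inl _) => r
  | .inr (.inr _) => m

def Row.idx : Row m r → ℕ
  | .inl a => a
  | .inr (.inl a) => a
  | .inr (.inr a) => a

def Col.idx : Col m r → ℕ
  | .inl b => b
  | .inr b => b

def block : Row m r × Col m r → ℕ
  | (.inl _, .inl _) => 0
  | (.inr (.inl _), .inl _) => 1
  | (.inl _, .inr _) => 2
  | (.inr (.inr _), .inl _) => 3
  | (.inr (.inl _), .inr _) => 4
  | (.inr (.inr _), .inr _) => 5

variable (m r) in
def blockSize : ℕ → ℕ
  | 0 => m * (m + r)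
  | 1 => r * (m + r)
  | 2 => m * m
  | 3 => m * (m + r)
  | 4 => r * m
  | _ => m * m

def label (x : Row m r × Col m r) : ℕ :=
  ∑ l ∈ range (block x), blockSize m r l + (Col.idx x.2 * height x.1 + Row.idx x.1)

lemma label_injective : Function.Injective (label (m := m) (r := r)) := by
  apply injective_blockLayout
  · rintro ⟨a | a | a, b | b⟩ <;>
      simp only [block, blockSize, Row.idx, Col.idx, height] <;> nlinarith [a.isLt, b.isLt]
  · rintro ⟨a | a | a, b | b⟩ ⟨a' | a' | a', b' | b'⟩ hblk hpos <;>
      -- `omega` discards the pairs of cells lying in different blocks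
      simp only [block] at hblk <;> (try omega) <;>
      simp only [Row.idx, Col.idx, height] at hpos <;>
      obtain ⟨hb, ha⟩ := eq_and_eq_of_mul_add_eq a.isLt a'.isLt hpos <;>
      rw [Fin.val_inj] at hb ha <;> rw [hb, ha]

def rowStart : Row m r → ℕ
  | .inl a => a
  | .inr (.inl a) => m * (m + r) + a
  | .inr (.inr a) => (m + r) * (m + r) + m * m + a

def colStart : Col m r → ℕ
  | .inl b => b * m
  | .inr b => (m + r) * (m + r) + b * m

lemma label_mem_row (hr : r ≤ 1) (x : Row m r) (y : Col m r) :
    rowStart x ≤ label (x, y) ∧ label (x, y) < rowStart x + (m + r) * (2 * m + 1) := by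
  obtain rfl | rfl : r = 0 ∨ r = 1 := by omega
  all_goals
    rcases x with a | a | a <;> rcases y with b | b <;>
      constructor <;>
      simp only [label, block, blockSize, rowStart, Row.idx, Col.idx, height, sum_range_succ,
        sum_range_zero] <;>
      nlinarith [a.isLt, b.isLt, Nat.zero_le m]

lemma label_mem_col (hr : r ≤ 1) (x : Row m r) (y : Col m r) :
    colStart y ≤ label (x, y) ∧ label (x, y) < colStart y + (m + r) * (2 * m + 1) := by
  obtain rfl | rfl : r = 0 ∨ r = 1 := by omega
  all_goals
    rcases x with a | a | a <;> rcases y with b | b <;>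
      constructor <;>
      simp only [label, block, blockSize, colStart, Row.idx, Col.idx, height, sum_range_succ,
        sum_range_zero] <;>
      nlinarith [a.isLt, b.isLt, Nat.zero_le m]

theorem bw_rookGraph_le (hr : r ≤ 1) :
    bw (rookGraph (Row m r) (Col m r)) ≤ (m + r) * (2 * m + 1) - 1 :=
  bw_le <| isBandwidthLabeling_rookGraph_of_windows label_injective _
    (fun x => ⟨rowStart x, label_mem_row hr x⟩)
    (fun y => ⟨colStart y, fun x => label_mem_col hr x y⟩)

end RookLabeling

theorem bw_rookGraph_fin_le (n : ℕ) :
    bw (rookGraph (Fin n) (Fin n)) ≤ (n + 1).choose 2 - 1 := by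
  obtain ⟨m, r, hr, rfl⟩ : ∃ m r, r ≤ 1 ∧ n = 2 * m + r := ⟨n / 2, n % 2, by omega, by omega⟩
  have eRow : Fin (2 * m + r) ≃ RookLabeling.Row m r :=
    (Fintype.equivFinOfCardEq (by simp; omega)).symm
  have eCol : Fin (2 * m + r) ≃ RookLabeling.Col m r :=
    (Fintype.equivFinOfCardEq (by simp; omega)).symm
  rw [bw_congr (rookGraphCongr eRow eCol), two_mul_add_add_one_choose_two hr]
  exact RookLabeling.bw_rookGraph_le hr

theorem edgeBW_completeBipartite_general (n : ℕ) :
    edgeBW (completeBipartiteGraph (Fin n) (Fin n)) = (n + 1).choose 2 - 1 := by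
  classical
  rw [edgeBW_eq_bw_lineGraph, ← bw_congr rookGraphIsoLineGraph]
  exact le_antisymm (bw_rookGraph_fin_le n)
    (by simpa using choose_two_sub_one_le_bw_rookGraph (Fin n))

theorem edgeBW_completeBipartite (n : ℕ) (hn : 1 ≤ n) :
    edgeBW (completeBipartiteGraph (Fin n) (Fin n)) = (n + 1).choose 2 - 1 :=
  edgeBW_completeBipartite_general n
end
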